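/- arXiv:2507.15488 — 7 statements merged into one kernel-verified Lean document; each statement's English description precedes it below -/
import Mathlib

section
/- Let n, N be positive integers, let z_1, …, z_n be pairwise distinct nonzero complex numbers, let λ_1, …, λ_N be real numbers and a_1, …, a_N be complex numbers with a_ℓ ≠ 0 for every ℓ and z_k ≠ a_ℓ for all k, ℓ. Assume that for every k = 1, …, n: ∑_{j ≠ k} 1/(z_k − z_j) + ∑_{ℓ=1}^N λ_ℓ/(z_k − a_ℓ) = 0. Set z* := 1/conj(z) for z ≠ 0. Then the points z_1*, …, z_n* satisfy, for every k = 1, …, n: ∑_{j ≠ k} 1/(z_k* − z_j*) + (−n + 1 − ∑_{ℓ=1}^N λ_ℓ)/z_k* + ∑_{ℓ=1}^N λ_ℓ/(z_k* − a_ℓ*) = 0. -/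
/-!
Inversion `z ↦ 1 / conj z` is conjugation followed by `c ↦ c⁻¹`. Conjugating the equilibrium
equations keeps them valid at the points `conj z_k`, and for `c ≠ d` nonzero
`μ / (c⁻¹ - d⁻¹) = μ c - c² μ / (c - d)`. So at `c = conj z_k` the inverted forces equal
`-c²` times the conjugated (vanishing) forces plus `c` times the total charge `n - 1 + ∑ λ`,
which the new charge `-n + 1 - ∑ λ` at the origin exactly cancels.
-/

open Complex

theorem div_inv_sub_inv {K : Type*} [Field K] (μ : K) {c d : K} (hc : c ≠ 0) (hd : d ≠ 0)
    (hcd : c ≠ d) : μ / (c⁻¹ - d⁻¹) = μ * c - c ^ 2 * (μ / (c - d)) := by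
  have hdc : d - c ≠ 0 := sub_ne_zero.mpr hcd.symm
  have hcd' : c - d ≠ 0 := sub_ne_zero.mpr hcd
  rw [inv_sub_inv hc hd]
  field_simp
  ring

theorem sum_div_inv_sub_inv {K ι : Type*} [Field K] (s : Finset ι) (μ w : ι → K) {c : K}
    (hc : c ≠ 0) (hw : ∀ i ∈ s, w i ≠ 0) (hcw : ∀ i ∈ s, c ≠ w i) :
    ∑ i ∈ s, μ i / (c⁻¹ - (w i)⁻¹) = (∑ i ∈ s, μ i) * c - c ^ 2 * ∑ i ∈ s, μ i / (c - w i) := by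
  rw [Finset.sum_mul, Finset.mul_sum, ← Finset.sum_sub_distrib]
  exact Finset.sum_congr rfl fun i hi => div_inv_sub_inv (μ i) hc (hw i hi) (hcw i hi)

theorem conj_equilibrium {n N : ℕ} (z : Fin n → ℂ) (lam : Fin N → ℝ) (a : Fin N → ℂ) (k : Fin n)
    (heq : (∑ j ∈ Finset.univ.erase k, 1 / (z k - z j)) +
      (∑ l, (lam l : ℂ) / (z k - a l)) = 0) :
    (∑ j ∈ Finset.univ.erase k, 1 / (starRingEnd ℂ (z k) - starRingEnd ℂ (z j))) +
      (∑ l, (lam l : ℂ) / (starRingEnd ℂ (z k) - starRingEnd ℂ (a l))) = 0 := by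
  simpa [map_sum, map_div₀, map_sub, conj_ofReal] using congrArg (starRingEnd ℂ) heq

theorem inverted_equilibrium_general
    (n N : ℕ)
    (z : Fin n → ℂ) (hzinj : Function.Injective z) (hz0 : ∀ k, z k ≠ 0)
    (lam : Fin N → ℝ) (a : Fin N → ℂ)
    (ha0 : ∀ l, a l ≠ 0) (hza : ∀ k l, z k ≠ a l)
    (heq : ∀ k, (∑ j ∈ Finset.univ.erase k, 1 / (z k - z j)) +
      (∑ l, (lam l : ℂ) / (z k - a l)) = 0) :
    ∀ k, (∑ j ∈ Finset.univ.erase k,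
        1 / ((starRingEnd ℂ (z k))⁻¹ - (starRingEnd ℂ (z j))⁻¹)) +
      (-(n : ℂ) + 1 - ∑ l, (lam l : ℂ)) / (starRingEnd ℂ (z k))⁻¹ +
      (∑ l, (lam l : ℂ) / ((starRingEnd ℂ (z k))⁻¹ - (starRingEnd ℂ (a l))⁻¹)) = 0 := by
  intro k
  have hconj := conj_equilibrium z lam a k (heq k)
  have hc : starRingEnd ℂ (z k) ≠ 0 := by simpa using hz0 k
  rw [sum_div_inv_sub_inv _ (fun _ => 1) _ hc (fun j _ => by simpa using hz0 j)
      (fun j hj => (starRingEnd ℂ).injective.ne (hzinj.ne (Finset.ne_of_mem_erase hj).symm)),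
    sum_div_inv_sub_inv _ _ _ hc (fun l _ => by simpa using ha0 l)
      (fun l _ => (starRingEnd ℂ).injective.ne (hza k l)),
    div_inv_eq_mul]
  have hcard : ((Finset.univ.erase k).card : ℂ) = n - 1 := by
    rw [Finset.card_erase_of_mem (Finset.mem_univ k), Finset.card_univ, Fintype.card_fin,
      Nat.cast_pred k.pos]
  simp only [Finset.sum_const, nsmul_eq_mul, mul_one, hcard]
  linear_combination (-(starRingEnd ℂ (z k)) ^ 2) * hconj

theorem inverted_equilibrium
    (n N : ℕ) (hn : 0 < n) (hN : 0 < N)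
    (z : Fin n → ℂ) (hzinj : Function.Injective z) (hz0 : ∀ k, z k ≠ 0)
    (lam : Fin N → ℝ) (a : Fin N → ℂ)
    (ha0 : ∀ l, a l ≠ 0) (hza : ∀ k l, z k ≠ a l)
    (heq : ∀ k, (∑ j ∈ Finset.univ.erase k, 1 / (z k - z j)) +
      (∑ l, (lam l : ℂ) / (z k - a l)) = 0) :
    ∀ k, (∑ j ∈ Finset.univ.erase k,
        1 / ((starRingEnd ℂ (z k))⁻¹ - (starRingEnd ℂ (z j))⁻¹)) +
      (-(n : ℂ) + 1 - ∑ l, (lam l : ℂ)) / (starRingEnd ℂ (z k))⁻¹ +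
      (∑ l, (lam l : ℂ) / ((starRingEnd ℂ (z k))⁻¹ - (starRingEnd ℂ (a l))⁻¹)) = 0 :=
  inverted_equilibrium_general n N z hzinj hz0 lam a ha0 hza heq
end

section
/- Let d, n ∈ ℕ and let f ∈ ℂ[X] with deg f ≤ d and f(0) = 1, and let p_n be the degree-n OPA to 1/f. Then the coefficient of X^d in the product p_n · f · f*_d equals 1, and the coefficient of X^i in p_n · f · f*_d equals 0 for every i with d + 1 ≤ i ≤ n + d. Equivalently, there exist complex numbers u_0, …, u_{d−1} and u_{n+d+1}, …, u_{n+2d} such that p_n(X) · f(X) · f*_d(X) = X^d + ∑_{i=0}^{d−1} u_i X^i + ∑_{j=n+d+1}^{n+2d} u_j X^j. -/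
open Polynomial

/-- The H² inner product of two polynomials: `⟨g, h⟩ = ∑ₖ gₖ conj(hₖ)`. -/
noncomputable def hinner (g h : Polynomial ℂ) : ℂ :=
  ∑ᶠ k : ℕ, g.coeff k * (starRingEnd ℂ) (h.coeff k)

/-- The squared H² norm of a polynomial: `‖g‖² = ∑ₖ |gₖ|²`. -/
noncomputable def hnormSq (g : Polynomial ℂ) : ℝ :=
  ∑ᶠ k : ℕ, ‖g.coeff k‖ ^ 2

/-- `p` is the degree-`n` optimal polynomial approximant (OPA) to `1/f` in H². -/
def IsOPA (f : Polynomial ℂ) (n : ℕ) (p : Polynomial ℂ) : Prop :=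
  p.degree ≤ (n : ℕ) ∧
    ∀ q : Polynomial ℂ, q.degree ≤ (n : ℕ) → hnormSq (1 - p * f) ≤ hnormSq (1 - q * f)

/-- Conjugate-reversal of order `N`: `q*_N(X) = ∑_{j=0}^N conj(q_{N-j}) Xʲ`. -/
noncomputable def cRev (N : ℕ) (q : Polynomial ℂ) : Polynomial ℂ :=
  ∑ j ∈ Finset.range (N + 1), Polynomial.C ((starRingEnd ℂ) (q.coeff (N - j))) * Polynomial.X ^ j

/-!
Minimality of `t ↦ ‖1 - (p + t q) f‖²` at `t = 0` gives the orthogonality relations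
`⟨1 - p f, q f⟩ = 0` for every `q` of degree at most `n`; with `q = Xʲ` they read
`⟨p f, Xʲ f⟩ = ⟨1, Xʲ f⟩ = conj (f(0)) · 0ʲ`. Multiplication by the conjugate-reversal `f*_d`
turns these inner products into coefficients: the coefficient of `X^(d+j)` in `g · f*_d` is
`⟨g, Xʲ f⟩`.
-/

open ComplexConjugate Finset

section HardyInner

variable {m : ℕ}

lemma hinner_eq_sum_range_of_natDegree_lt_left {g : ℂ[X]} (h : ℂ[X]) (hg : g.natDegree < m) :
    hinner g h = ∑ k ∈ range m, g.coeff k * conj (h.coeff k) :=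
  finsum_eq_sum_of_support_subset _ fun _ hk =>
    supp_subset_range hg (mem_support_iff.mpr (left_ne_zero_of_mul hk))

lemma hinner_eq_sum_range_of_natDegree_lt_right (g : ℂ[X]) {h : ℂ[X]} (hh : h.natDegree < m) :
    hinner g h = ∑ k ∈ range m, g.coeff k * conj (h.coeff k) :=
  finsum_eq_sum_of_support_subset _ fun _ hk =>
    supp_subset_range hh
      (mem_support_iff.mpr fun h0 => right_ne_zero_of_mul hk (by rw [h0, map_zero]))

lemma hnormSq_eq_sum_range {g : ℂ[X]} (hg : g.natDegree < m) :
    hnormSq g = ∑ k ∈ range m, ‖g.coeff k‖ ^ 2 :=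
  finsum_eq_sum_of_support_subset _ fun _ hk =>
    supp_subset_range hg
      (mem_support_iff.mpr (norm_ne_zero_iff.mp ((pow_ne_zero_iff two_ne_zero).mp hk)))

lemma hnormSq_nonneg (g : ℂ[X]) : 0 ≤ hnormSq g :=
  finsum_nonneg fun _ => sq_nonneg _

lemma hinner_sub_left (a b h : ℂ[X]) : hinner (a - b) h = hinner a h - hinner b h := by
  have hlt : max a.natDegree b.natDegree < max a.natDegree b.natDegree + 1 := lt_add_one _
  rw [hinner_eq_sum_range_of_natDegree_lt_left h ((natDegree_sub_le a b).trans_lt hlt),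
    hinner_eq_sum_range_of_natDegree_lt_left h ((le_max_left _ _).trans_lt hlt),
    hinner_eq_sum_range_of_natDegree_lt_left h ((le_max_right _ _).trans_lt hlt),
    ← sum_sub_distrib]
  simp only [coeff_sub, sub_mul]

lemma hinner_one_left (h : ℂ[X]) : hinner 1 h = conj (h.coeff 0) := by
  rw [hinner_eq_sum_range_of_natDegree_lt_left h (m := 1) (by simp)]
  simp

lemma hnormSq_sub_C_mul (r s : ℂ[X]) (t : ℂ) :
    hnormSq (r - C t * s) =
      hnormSq r - 2 * (conj t * hinner r s).re + Complex.normSq t * hnormSq s := by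
  set M := max r.natDegree s.natDegree + 1
  have hr : r.natDegree < M := (le_max_left _ _).trans_lt (lt_add_one _)
  have hs : s.natDegree < M := (le_max_right _ _).trans_lt (lt_add_one _)
  have hrs : (r - C t * s).natDegree < M :=
    (natDegree_sub_le _ _).trans_lt (max_lt hr ((natDegree_C_mul_le t s).trans_lt hs))
  rw [hnormSq_eq_sum_range hrs, hnormSq_eq_sum_range hr, hnormSq_eq_sum_range hs,
    hinner_eq_sum_range_of_natDegree_lt_left s hr, mul_sum, Complex.re_sum, mul_sum, mul_sum,
    ← sum_sub_distrib, ← sum_add_distrib]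
  refine sum_congr rfl fun k _ => ?_
  have hcross : r.coeff k * conj (t * s.coeff k) = conj t * (r.coeff k * conj (s.coeff k)) := by
    rw [map_mul]; ring
  simp only [coeff_sub, coeff_C_mul, Complex.sq_norm, Complex.normSq_sub, Complex.normSq_mul,
    hcross]
  ring

end HardyInner

-- If `c ≠ 0`, the hypothesis fails at `t = c / (B + 1)`.
lemma eq_zero_of_forall_two_mul_re_le {c : ℂ} {B : ℝ} (hB : 0 ≤ B)
    (h : ∀ t : ℂ, 2 * (conj t * c).re ≤ Complex.normSq t * B) : c = 0 := by
  by_contra hc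
  have hc' : 0 < Complex.normSq c := Complex.normSq_pos.mpr hc
  set ε : ℝ := (B + 1)⁻¹
  have hε : 0 < ε := by positivity
  have hεB : ε * B < 1 := by
    rw [inv_mul_lt_one₀ (by positivity)]; linarith
  have := h (ε * c)
  rw [map_mul, Complex.conj_ofReal, mul_assoc, mul_comm (conj c), Complex.mul_conj,
    ← Complex.ofReal_mul, Complex.ofReal_re, Complex.normSq_mul, Complex.normSq_ofReal] at this
  nlinarith [mul_pos hε hc']

namespace IsOPA

variable {f p : ℂ[X]} {n : ℕ}

theorem hinner_sub_mul_eq_zero (hp : IsOPA f n p) {q : ℂ[X]} (hq : q.degree ≤ n) :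
    hinner (1 - p * f) (q * f) = 0 := by
  refine eq_zero_of_forall_two_mul_re_le (hnormSq_nonneg (q * f)) fun t => ?_
  have hdeg : (p + C t * q).degree ≤ n :=
    (degree_add_le _ _).trans (max_le hp.1 ((degree_mul_le _ _).trans
      ((add_le_add degree_C_le hq).trans_eq (zero_add _))))
  have hmin := hp.2 _ hdeg
  rw [show 1 - (p + C t * q) * f = (1 - p * f) - C t * (q * f) by ring, hnormSq_sub_C_mul] at hmin
  linarith

theorem hinner_mul_eq_hinner_one (hp : IsOPA f n p) {q : ℂ[X]} (hq : q.degree ≤ n) :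
    hinner (p * f) (q * f) = hinner 1 (q * f) := by
  have h := hp.hinner_sub_mul_eq_zero hq
  rwa [hinner_sub_left, sub_eq_zero, eq_comm] at h

end IsOPA

lemma coeff_mul_cRev_add (g f : ℂ[X]) (d j : ℕ) :
    (g * cRev d f).coeff (d + j) = ∑ b ∈ range (d + 1), g.coeff (j + b) * conj (f.coeff b) := by
  rw [cRev, mul_sum, finsetSum_coeff,
    ← sum_range_reflect (fun b => g.coeff (j + b) * conj (f.coeff b))]
  refine sum_congr rfl fun b hb => ?_
  have hbd : b ≤ d := Nat.lt_succ_iff.mp (mem_range.mp hb)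
  rw [← mul_assoc, coeff_mul_X_pow', if_pos (by omega), coeff_mul_C]
  congr 3; omega

lemma hinner_X_pow_mul (g : ℂ[X]) {f : ℂ[X]} {d : ℕ} (hf : f.degree ≤ d) (j : ℕ) :
    hinner g (X ^ j * f) = ∑ b ∈ range (d + 1), g.coeff (j + b) * conj (f.coeff b) := by
  have hdeg : (X ^ j * f).natDegree < j + (d + 1) :=
    (natDegree_mul_le.trans
      (add_le_add (natDegree_X_pow_le j) (natDegree_le_of_degree_le hf))).trans_lt (by omega)
  rw [hinner_eq_sum_range_of_natDegree_lt_right g hdeg, sum_range_add,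
    sum_eq_zero fun k hk => by
      rw [coeff_X_pow_mul', if_neg (by simpa using hk), map_zero, mul_zero], zero_add]
  simp only [coeff_X_pow_mul', le_add_iff_nonneg_right, zero_le, if_true, add_tsub_cancel_left]

theorem opa_closed_formula (d n : ℕ) (f : Polynomial ℂ)
    (hdf : f.degree ≤ (d : ℕ)) (hf0 : f.eval 0 = 1)
    (p : Polynomial ℂ) (hp : IsOPA f n p) :
    (p * f * cRev d f).coeff d = 1 ∧
      ∀ i : ℕ, d + 1 ≤ i → i ≤ n + d → (p * f * cRev d f).coeff i = 0 := by
  have hcoeff : ∀ j ≤ n, (p * f * cRev d f).coeff (d + j) = 0 ^ j := by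
    intro j hj
    have hXj : (X ^ j : ℂ[X]).degree ≤ n := (degree_X_pow_le j).trans (by exact_mod_cast hj)
    rw [coeff_mul_cRev_add, ← hinner_X_pow_mul _ hdf, hp.hinner_mul_eq_hinner_one hXj,
      hinner_one_left, coeff_zero_eq_eval_zero, eval_mul, hf0, eval_pow, eval_X, mul_one,
      map_pow, map_zero]
  refine ⟨by simpa using hcoeff 0 n.zero_le, fun i hi hin => ?_⟩
  obtain ⟨j, rfl⟩ := Nat.exists_eq_add_of_le (Nat.le_of_succ_le hi)
  rw [hcoeff j (by omega), zero_pow (by omega)]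
end

section
/- Let f ∈ ℂ[X] be a nonzero polynomial, n ∈ ℕ, and let φ_0, …, φ_n ∈ ℂ[X] be polynomials with deg φ_k = k for each k and ⟨φ_j · f, φ_k · f⟩ = δ_{jk} (Kronecker delta) for all 0 ≤ j, k ≤ n. Let A_n be the leading coefficient of φ_n and assume φ_n(0) ≠ 0. Then the degree-n OPA p_n to 1/f satisfies p_n = conj(f(0)) · A_n · (φ_n)*_n, where (φ_n)*_n is the conjugate-reversal of φ_n of order n. -/
open Polynomial

/-!
The OPA is characterised by orthogonality: if `deg q ≤ n` and `1 - q f ⟂ Xʲ f` for all `j ≤ n`,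
then for any `p` of degree `≤ n` Pythagoras gives `‖1 - p f‖² = ‖(q - p) f‖² + ‖1 - q f‖²`,
so `q` is the unique minimiser.

The candidate `q = conj (f 0) Aₙ φₙ*` is orthogonal in this sense because of the identity
`⟨u, v*_N⟩ = [X^N] (u v)`, which makes `⟨a f, b*ₙ f⟩` symmetric in `a` and `b` (both are a
coefficient of `a b f f*`). Hence `⟨Xʲ f, φₙ* f⟩ = conj ⟨Xⁿ⁻ʲ f, φₙ f⟩`, and orthonormality gives
`⟨r f, φₙ f⟩ = rₙ / Aₙ` for `deg r ≤ n`, which vanishes unless `j = 0`; at `j = 0` it matches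
`⟨f, 1⟩ = f 0`.
-/

open Finset Submodule
open scoped ComplexConjugate

theorem hinner_eq_sum_support (g h : ℂ[X]) :
    hinner g h = ∑ k ∈ g.support, g.coeff k * conj (h.coeff k) :=
  finsum_eq_sum_of_support_subset _ fun _ hk =>
    mem_support_iff.2 (left_ne_zero_of_mul (Function.mem_support.1 hk))

theorem hnormSq_eq_sum_support (g : ℂ[X]) :
    hnormSq g = ∑ k ∈ g.support, ‖g.coeff k‖ ^ 2 :=
  finsum_eq_sum_of_support_subset _ fun _ hk =>
    mem_support_iff.2 <| norm_ne_zero_iff.1 <|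
      (pow_ne_zero_iff two_ne_zero).1 (Function.mem_support.1 hk)

theorem hinner_conj_symm (g h : ℂ[X]) : conj (hinner g h) = hinner h g := by
  rw [hinner, hinner, starRingEnd_apply, ← starAddEquiv_apply, AddEquiv.map_finsum]
  simp only [starAddEquiv_apply, ← starRingEnd_apply, map_mul, Complex.conj_conj, mul_comm]

theorem hinner_add_right (g a b : ℂ[X]) : hinner g (a + b) = hinner g a + hinner g b := by
  simp only [hinner_eq_sum_support, coeff_add, map_add, mul_add, sum_add_distrib]

theorem hinner_sub_right (g a b : ℂ[X]) : hinner g (a - b) = hinner g a - hinner g b := by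
  simp only [hinner_eq_sum_support, coeff_sub, map_sub, mul_sub, sum_sub_distrib]

theorem hinner_smul_right (g a : ℂ[X]) (c : ℂ) : hinner g (c • a) = conj c * hinner g a := by
  simp only [hinner_eq_sum_support, coeff_smul, smul_eq_mul, map_mul, mul_sum, mul_left_comm]

theorem hinner_add_left (a b h : ℂ[X]) : hinner (a + b) h = hinner a h + hinner b h := by
  rw [← hinner_conj_symm, hinner_add_right, map_add, hinner_conj_symm, hinner_conj_symm]

theorem hinner_smul_left (a h : ℂ[X]) (c : ℂ) : hinner (c • a) h = c * hinner a h := by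
  rw [← hinner_conj_symm, hinner_smul_right, map_mul, Complex.conj_conj, hinner_conj_symm]

theorem hinner_zero_left (h : ℂ[X]) : hinner 0 h = 0 := by
  simp [hinner_eq_sum_support]

theorem hinner_one_right (g : ℂ[X]) : hinner g 1 = g.coeff 0 :=
  (finsum_eq_single _ 0 fun k hk => by simp [coeff_one, hk]).trans (by simp)

theorem hinner_self (g : ℂ[X]) : hinner g g = hnormSq g := by
  simp only [hinner_eq_sum_support, hnormSq_eq_sum_support, Complex.ofReal_sum,
    Complex.mul_conj, Complex.normSq_eq_norm_sq, Complex.ofReal_pow]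

theorem hnormSq_add_of_hinner_eq_zero {a b : ℂ[X]} (h : hinner a b = 0) :
    hnormSq (a + b) = hnormSq a + hnormSq b := by
  have h' : hinner b a = 0 := by rw [← hinner_conj_symm, h, map_zero]
  have := hinner_self (a + b)
  rw [hinner_add_left, hinner_add_right, hinner_add_right, h, h', hinner_self, hinner_self] at this
  simp only [add_zero, zero_add] at this
  exact_mod_cast this.symm

theorem hnormSq_pos {g : ℂ[X]} (hg : g ≠ 0) : 0 < hnormSq g := by
  rw [hnormSq_eq_sum_support]
  exact sum_pos (fun _ hk => pow_pos (norm_pos_iff.2 (mem_support_iff.1 hk)) 2)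
    (support_nonempty.2 hg)

theorem coeff_cRev (N : ℕ) (q : ℂ[X]) (k : ℕ) :
    (cRev N q).coeff k = if k ≤ N then conj (q.coeff (N - k)) else 0 := by
  simp only [cRev, finsetSum_coeff, coeff_C_mul, coeff_X_pow, mul_ite, mul_one, mul_zero,
    sum_ite_eq, mem_range, Nat.lt_succ_iff]

theorem natDegree_cRev_le (N : ℕ) (q : ℂ[X]) : (cRev N q).natDegree ≤ N :=
  natDegree_le_iff_coeff_eq_zero.2 fun k hk => by rw [coeff_cRev, if_neg (by omega)]

theorem cRev_eq_reflect_map {N : ℕ} {q : ℂ[X]} (hq : q.natDegree ≤ N) :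
    cRev N q = reflect N (q.map (starRingEnd ℂ)) := by
  ext k
  rw [coeff_cRev, coeff_reflect, coeff_map]
  split_ifs with hk
  · rw [revAt_le hk]
  · rw [revAt_eq_self_of_lt (by omega), q.coeff_eq_zero_of_natDegree_lt (by omega), map_zero]

theorem cRev_cRev {N : ℕ} {q : ℂ[X]} (hq : q.natDegree ≤ N) : cRev N (cRev N q) = q := by
  ext k
  rw [coeff_cRev]
  split_ifs with hk
  · rw [coeff_cRev, if_pos (Nat.sub_le _ _), Nat.sub_sub_self hk, Complex.conj_conj]
  · exact (q.coeff_eq_zero_of_natDegree_lt (by omega)).symm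

theorem cRev_mul {M K : ℕ} {a b : ℂ[X]} (ha : a.natDegree ≤ M) (hb : b.natDegree ≤ K) :
    cRev (M + K) (a * b) = cRev M a * cRev K b := by
  rw [cRev_eq_reflect_map (natDegree_mul_le.trans (add_le_add ha hb)), cRev_eq_reflect_map ha,
    cRev_eq_reflect_map hb, Polynomial.map_mul]
  exact reflect_mul _ _ (natDegree_map_le.trans ha) (natDegree_map_le.trans hb)

theorem cRev_X_pow {N m : ℕ} (h : m ≤ N) : cRev N ((X : ℂ[X]) ^ m) = X ^ (N - m) := by
  rw [cRev_eq_reflect_map (by rwa [natDegree_X_pow]), Polynomial.map_pow, map_X,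
    reflect_monomial, revAt_le h]

theorem hinner_cRev (u v : ℂ[X]) (N : ℕ) : hinner u (cRev N v) = (u * v).coeff N := by
  rw [coeff_mul, Nat.sum_antidiagonal_eq_sum_range_succ_mk, hinner]
  refine (finsum_eq_sum_of_support_subset _ fun k hk => ?_).trans (sum_congr rfl fun k hk => ?_)
  · refine mem_coe.2 (mem_range.2 (Nat.lt_succ_of_le (not_lt.1 fun hk' => hk ?_)))
    simp only [coeff_cRev, if_neg (not_le.2 hk'), map_zero, mul_zero]
  · rw [mem_range, Nat.lt_succ_iff] at hk
    rw [coeff_cRev, if_pos hk, Complex.conj_conj]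

theorem hinner_mul_cRev_mul {n : ℕ} {b : ℂ[X]} (a f : ℂ[X]) (hb : b.natDegree ≤ n) :
    hinner (a * f) (cRev n b * f) =
      (a * b * (f * cRev f.natDegree f)).coeff (n + f.natDegree) := by
  rw [← cRev_cRev (le_refl f.natDegree), ← cRev_mul hb (natDegree_cRev_le _ _), hinner_cRev,
    cRev_cRev le_rfl]
  ring_nf

theorem hinner_mul_cRev_mul_comm {n : ℕ} {a b : ℂ[X]} (f : ℂ[X]) (ha : a.natDegree ≤ n)
    (hb : b.natDegree ≤ n) : hinner (a * f) (cRev n b * f) = hinner (b * f) (cRev n a * f) := by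
  rw [hinner_mul_cRev_mul a f hb, hinner_mul_cRev_mul b f ha, mul_comm a b]

theorem span_image_Iio_eq_degreeLT {K : Type*} [Field K] {φ : ℕ → K[X]} {m : ℕ}
    (hφ : ∀ k < m, (φ k).degree = k) : span K (φ '' Set.Iio m) = degreeLT K m := by
  let S : Sequence K := ⟨fun k => if k < m then φ k else X ^ k, fun k => by
    split_ifs with hk
    exacts [hφ k hk, degree_X_pow k]⟩
  have hS : S '' Set.Iio m = φ '' Set.Iio m := Set.image_congr fun k hk => if_pos hk
  rw [← hS, S.span_degreeLT fun k _ => (leadingCoeff_ne_zero.2 (S.ne_zero k)).isUnit]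

theorem mem_span_image_Iio_succ_of_degree_le {K : Type*} [Field K] {φ : ℕ → K[X]} {n : ℕ}
    (hφ : ∀ k ≤ n, (φ k).degree = k) {q : K[X]} (hq : q.degree ≤ n) :
    q ∈ span K (φ '' Set.Iio (n + 1)) := by
  rw [span_image_Iio_eq_degreeLT fun k hk => hφ k (Nat.lt_succ_iff.1 hk),
    degreeLT_succ_eq_degreeLE]
  exact mem_degreeLE.2 hq

theorem hinner_mul_left_eq_of_mem_span {S : Set ℂ[X]} {g r : ℂ[X]} {L : ℂ[X] →ₗ[ℂ] ℂ}
    (h : ∀ s ∈ S, hinner (s * g) r = L s) {q : ℂ[X]} (hq : q ∈ span ℂ S) :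
    hinner (q * g) r = L q := by
  induction hq using Submodule.span_induction with
  | mem s hs => exact h s hs
  | zero => rw [zero_mul, hinner_zero_left, map_zero]
  | add a b _ _ ha hb => rw [add_mul, hinner_add_left, ha, hb, map_add]
  | smul c a _ ha => rw [smul_mul_assoc, hinner_smul_left, ha, map_smul, smul_eq_mul]

section Orthonormal

variable {f : ℂ[X]} {n : ℕ} {φ : ℕ → ℂ[X]}

theorem hinner_mul_mul_eq_coeff_div (hdeg : ∀ k ≤ n, (φ k).degree = (k : ℕ))
    (horth : ∀ j ≤ n, ∀ k ≤ n, hinner (φ j * f) (φ k * f) = if j = k then 1 else 0)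
    {q : ℂ[X]} (hq : q.degree ≤ n) :
    hinner (q * f) (φ n * f) = q.coeff n / (φ n).leadingCoeff := by
  rw [div_eq_inv_mul]
  refine hinner_mul_left_eq_of_mem_span (L := (φ n).leadingCoeff⁻¹ • lcoeff ℂ n) ?_
    (mem_span_image_Iio_succ_of_degree_le hdeg hq)
  rintro _ ⟨k, hk, rfl⟩
  have hk : k ≤ n := Nat.lt_succ_iff.1 hk
  rw [horth k hk n le_rfl, LinearMap.smul_apply, lcoeff_apply, smul_eq_mul]
  split_ifs with hkn
  · subst hkn
    rw [leadingCoeff, natDegree_eq_of_degree_eq_some (hdeg k hk),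
      inv_mul_cancel₀ (coeff_ne_zero_of_eq_degree (hdeg k hk))]
  · have hlt : (φ k).degree < n := by rw [hdeg k hk]; exact_mod_cast lt_of_le_of_ne hk hkn
    rw [coeff_eq_zero_of_degree_lt hlt, mul_zero]

theorem hinner_X_pow_mul_cRev_mul (hdeg : ∀ k ≤ n, (φ k).degree = (k : ℕ))
    (horth : ∀ j ≤ n, ∀ k ≤ n, hinner (φ j * f) (φ k * f) = if j = k then 1 else 0)
    {j : ℕ} (hj : j ≤ n) :
    hinner (X ^ j * f) (cRev n (φ n) * f) =
      if j = 0 then (conj (φ n).leadingCoeff)⁻¹ else 0 := by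
  have hφn : (φ n).natDegree ≤ n := natDegree_le_of_degree_le (hdeg n le_rfl).le
  calc hinner (X ^ j * f) (cRev n (φ n) * f)
      = hinner (φ n * f) (cRev n (X ^ j) * f) :=
        hinner_mul_cRev_mul_comm f (by rwa [natDegree_X_pow]) hφn
    _ = conj (hinner (X ^ (n - j) * f) (φ n * f)) := by rw [cRev_X_pow hj, hinner_conj_symm]
    _ = conj ((X ^ (n - j) : ℂ[X]).coeff n / (φ n).leadingCoeff) := by
        rw [hinner_mul_mul_eq_coeff_div hdeg horth
          (by rw [degree_X_pow]; exact_mod_cast n.sub_le j)]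
    _ = _ := by
        rw [coeff_X_pow]
        split_ifs <;> first | omega | simp

theorem hinner_X_pow_mul_one_sub_cRev_mul (hdeg : ∀ k ≤ n, (φ k).degree = (k : ℕ))
    (horth : ∀ j ≤ n, ∀ k ≤ n, hinner (φ j * f) (φ k * f) = if j = k then 1 else 0)
    {j : ℕ} (hj : j ≤ n) :
    hinner (X ^ j * f) (1 - C (conj (f.eval 0) * (φ n).leadingCoeff) * cRev n (φ n) * f) = 0 := by
  have hA : (φ n).leadingCoeff ≠ 0 :=
    leadingCoeff_ne_zero.2 (ne_zero_of_coe_le_degree (hdeg n le_rfl).ge)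
  rw [hinner_sub_right, hinner_one_right, C_mul', smul_mul_assoc, hinner_smul_right,
    hinner_X_pow_mul_cRev_mul hdeg horth hj, coeff_X_pow_mul']
  rcases eq_or_ne j 0 with rfl | hj0
  · rw [if_pos le_rfl, if_pos rfl, Nat.sub_zero, coeff_zero_eq_eval_zero, map_mul,
      Complex.conj_conj, mul_assoc, mul_inv_cancel₀ ((_root_.map_ne_zero _).2 hA), mul_one,
      sub_self]
  · rw [if_neg (by omega), if_neg hj0, mul_zero, sub_zero]

end Orthonormal

theorem IsOPA.eq_of_hinner_X_pow_mul_eq_zero {f : ℂ[X]} {n : ℕ} {p q : ℂ[X]} (hf : f ≠ 0)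
    (hp : IsOPA f n p) (hq : q.degree ≤ n)
    (horth : ∀ j ≤ n, hinner (X ^ j * f) (1 - q * f) = 0) : p = q := by
  have hperp : hinner ((q - p) * f) (1 - q * f) = 0 :=
    hinner_mul_left_eq_of_mem_span (L := 0)
      (by rintro _ ⟨j, hj, rfl⟩; exact horth j (Nat.lt_succ_iff.1 hj))
      (mem_span_image_Iio_succ_of_degree_le (fun k _ => degree_X_pow k)
        ((degree_sub_le q p).trans (max_le hq hp.1)))
  have hpyth : hnormSq (1 - p * f) = hnormSq ((q - p) * f) + hnormSq (1 - q * f) := by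
    rw [← hnormSq_add_of_hinner_eq_zero hperp]
    ring_nf
  by_contra hpq
  have := hnormSq_pos (mul_ne_zero (sub_ne_zero.2 (Ne.symm hpq)) hf)
  linarith [hp.2 q hq]

theorem opa_eq_reversed_opuc_general (f : Polynomial ℂ) (hf : f ≠ 0) (n : ℕ)
    (φ : ℕ → Polynomial ℂ) (hdeg : ∀ k ≤ n, (φ k).degree = (k : ℕ))
    (horth : ∀ j ≤ n, ∀ k ≤ n,
      hinner (φ j * f) (φ k * f) = if j = k then 1 else 0)
    (p : Polynomial ℂ) (hp : IsOPA f n p) :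
    p = Polynomial.C ((starRingEnd ℂ) (f.eval 0) * (φ n).leadingCoeff) * cRev n (φ n) :=
  hp.eq_of_hinner_X_pow_mul_eq_zero hf
    (degree_le_of_natDegree_le ((natDegree_C_mul_le _ _).trans (natDegree_cRev_le n (φ n))))
    fun _ hj => hinner_X_pow_mul_one_sub_cRev_mul hdeg horth hj

theorem opa_eq_reversed_opuc (f : Polynomial ℂ) (hf : f ≠ 0) (n : ℕ)
    (φ : ℕ → Polynomial ℂ) (hdeg : ∀ k ≤ n, (φ k).degree = (k : ℕ))
    (horth : ∀ j ≤ n, ∀ k ≤ n,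
      hinner (φ j * f) (φ k * f) = if j = k then 1 else 0)
    (hφn0 : (φ n).eval 0 ≠ 0)
    (p : Polynomial ℂ) (hp : IsOPA f n p) :
    p = Polynomial.C ((starRingEnd ℂ) (f.eval 0) * (φ n).leadingCoeff) * cRev n (φ n) :=
  opa_eq_reversed_opuc_general f hf n φ hdeg horth p hp
end

section
/- Let a > 0 be a real number and n ≥ 1, and let φ_n be a monic OPUC of degree n for the weight w(θ) := |1 − e^{iθ}|^{2a} on [0, 2π]. Suppose the roots z_1, …, z_n of φ_n are pairwise distinct, and that z_k ≠ 0 and z_k ≠ 1 for every k. Then for every k = 1, …, n: ∑_{j ≠ k} 1/(z_k − z_j) + (a + 1/2)/(z_k − 1) − ((n + a − 1)/2)/z_k = 0. That is, the zeros of φ_n are in equilibrium in the field of a positive charge of magnitude a + 1/2 at z = 1 and a negative charge of magnitude (n + a − 1)/2 at the origin. -/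
open Polynomial Complex

/-- `φ` is a monic orthogonal polynomial on the unit circle of degree `n`
for the weight `w` on `[0, 2π]`. -/
def IsMonicOPUC (w : ℝ → ℝ) (n : ℕ) (φ : Polynomial ℂ) : Prop :=
  φ.Monic ∧ φ.degree = (n : ℕ) ∧
    ∀ k < n, (∫ θ in (0:ℝ)..(2 * Real.pi),
      φ.eval (Complex.exp (θ * Complex.I)) *
        Complex.exp (-(k : ℂ) * θ * Complex.I) * (w θ : ℂ)) = 0

/-!
Let `H = X(X-1)φ'' + ((a-n+2)X + (n+a-1))φ' - n(a+1)φ`. Its coefficient of `X^n` cancels, so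
`deg H < n`. The weight satisfies the Pearson-type identity `w'(θ)(e^{iθ}-1) = ia(e^{iθ}+1)w(θ)`,
so integrating by parts (the boundary terms carry the factor `e^{iθ}-1`, which vanishes at `0`
and `2π`) turns the orthogonality of `φ` to `1, …, z^{n-1}` into that of `H`. Then `H` is
orthogonal to itself, hence `H = 0`: `φ` solves a hypergeometric equation. At a simple zero `z_k`,
`φ''(z_k) = 2φ'(z_k) ∑_{j≠k} 1/(z_k - z_j)` with `φ'(z_k) ≠ 0`, and the equation becomes the
equilibrium relation after a partial fraction decomposition of
`((a-n+2)z + (n+a-1)) / (2z(z-1))`.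
-/

open Set
open scoped Real

namespace Polynomial

variable {R : Type*} [CommRing R]

/-- Minus Gauss's hypergeometric operator: its kernel contains `₂F₁(α, β; γ; ·)`. -/
noncomputable def hypergeometricOp (α β γ : R) (p : R[X]) : R[X] :=
  X * (X - 1) * derivative (derivative p) + (C (α + β + 1) * X - C γ) * derivative p +
    C (α * β) * p

theorem coeff_hypergeometricOp (α β γ : R) (p : R[X]) (j : ℕ) :
    (hypergeometricOp α β γ p).coeff j =
      (j + α) * (j + β) * p.coeff j - (j + 1) * (j + γ) * p.coeff (j + 1) := by
  have h : hypergeometricOp α β γ p = X * (X * derivative (derivative p)) -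
      X * derivative (derivative p) + C (α + β + 1) * (X * derivative p) - C γ * derivative p +
      C (α * β) * p := by
    rw [hypergeometricOp]; ring
  rcases j with _ | _ | j <;>
  · simp only [h, coeff_add, coeff_sub, coeff_C_mul, coeff_X_mul, coeff_X_mul_zero,
      coeff_derivative]
    push_cast
    ring

theorem degree_hypergeometricOp_lt {n : ℕ} (β γ : R) {p : R[X]} (hp : p.natDegree ≤ n) :
    (hypergeometricOp (-n : R) β γ p).degree < n := by
  rw [degree_lt_iff_coeff_zero]
  intro j hj
  rw [coeff_hypergeometricOp, coeff_eq_zero_of_natDegree_lt (by omega : p.natDegree < j + 1)]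
  rcases hj.eq_or_lt with rfl | hlt
  · simp
  · rw [coeff_eq_zero_of_natDegree_lt (by omega)]; simp

end Polynomial

namespace Lagrange

open Finset

variable {F ι : Type*} [Field F] [DecidableEq ι] {s : Finset ι} {v : ι → F}

theorem eval_derivative_nodal_of_forall_ne {x : F} (hx : ∀ i ∈ s, x ≠ v i) :
    (derivative (nodal s v)).eval x = (nodal s v).eval x * ∑ i ∈ s, 1 / (x - v i) := by
  rw [derivative_nodal, eval_finsetSum, mul_sum]
  refine sum_congr rfl fun i hi => ?_
  rw [nodal_eq_mul_nodal_erase hi, eval_mul, eval_sub, eval_X, eval_C]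
  field_simp [sub_ne_zero.2 (hx i hi)]

theorem eval_derivative_nodal_at_node_ne_zero (hv : Set.InjOn v s) {i : ι} (hi : i ∈ s) :
    (derivative (nodal s v)).eval (v i) ≠ 0 := by
  intro h
  apply nodalWeight_ne_zero hv hi
  rw [nodalWeight_eq_eval_derivative_nodal hi, h, inv_zero]

theorem eval_derivative_derivative_nodal_at_node (hv : Set.InjOn v s) {i : ι} (hi : i ∈ s) :
    (derivative (derivative (nodal s v))).eval (v i) =
      2 * (derivative (nodal s v)).eval (v i) * ∑ j ∈ s.erase i, 1 / (v i - v j) := by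
  have hnode : ∀ j ∈ s.erase i, v i ≠ v j := fun j hj h =>
    (mem_erase.1 hj).1 (hv (mem_erase.1 hj).2 hi h.symm)
  rw [eval_nodal_derivative_eval_node_eq hi, mul_assoc,
    ← eval_derivative_nodal_of_forall_ne hnode, nodal_eq_mul_nodal_erase hi]
  simp only [derivative_mul, derivative_add, derivative_sub, derivative_X, derivative_C,
    sub_zero, one_mul, zero_mul, eval_add, eval_mul, eval_sub, eval_X, eval_C, sub_self]
  ring

theorem stieltjes_of_hypergeometricOp_nodal_eq_zero {α β γ : F}
    (h : hypergeometricOp α β γ (nodal s v) = 0) (hv : Set.InjOn v s) {i : ι} (hi : i ∈ s) :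
    2 * v i * (v i - 1) * ∑ j ∈ s.erase i, 1 / (v i - v j) + ((α + β + 1) * v i - γ) =
      0 := by
  have h' := congrArg (eval (v i)) h
  simp only [hypergeometricOp, eval_add, eval_sub, eval_mul, eval_X, eval_C, eval_one,
    eval_zero, eval_nodal_at_node hi, eval_derivative_derivative_nodal_at_node hv hi] at h'
  refine (mul_eq_zero.1 ?_).resolve_right (eval_derivative_nodal_at_node_ne_zero hv hi)
  linear_combination h'

end Lagrange

/-- The weight `|1 - e^{iθ}|^{2a}`. -/
noncomputable def circleWeight (a θ : ℝ) : ℝ := (2 - 2 * Real.cos θ) ^ a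

theorem two_sub_two_cos_pos {θ : ℝ} (h : θ ∈ Ioo 0 (2 * π)) : 0 < 2 - 2 * Real.cos θ := by
  have hsin : 0 < Real.sin (θ / 2) :=
    Real.sin_pos_of_pos_of_lt_pi (by linarith [h.1]) (by linarith [h.2])
  have hsq := Real.sin_sq_eq_half_sub (θ / 2)
  rw [mul_div_cancel₀ θ two_ne_zero] at hsq
  nlinarith

theorem circleWeight_nonneg (a θ : ℝ) : 0 ≤ circleWeight a θ :=
  Real.rpow_nonneg (by linarith [Real.cos_le_one θ]) a

theorem circleWeight_pos (a : ℝ) {θ : ℝ} (h : θ ∈ Ioo 0 (2 * π)) : 0 < circleWeight a θ :=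
  Real.rpow_pos_of_pos (two_sub_two_cos_pos h) a

theorem continuous_circleWeight {a : ℝ} (ha : 0 ≤ a) : Continuous (circleWeight a) :=
  (continuous_const.sub (continuous_const.mul Real.continuous_cos)).rpow_const fun _ => Or.inr ha

theorem two_mul_sin_mul_exp_sub_one (θ : ℝ) :
    ((2 * Real.sin θ : ℝ) : ℂ) * (exp (θ * I) - 1) =
      I * (exp (θ * I) + 1) * ((2 - 2 * Real.cos θ : ℝ) : ℂ) := by
  have he : exp (θ * I) * exp (-θ * I) = 1 := by rw [← exp_add]; simp
  push_cast
  rw [Complex.sin, Complex.cos]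
  linear_combination (2 * I) * he

theorem hasDerivAt_circleWeight_mul_exp_sub_one (a : ℝ) {θ : ℝ} (h : θ ∈ Ioo 0 (2 * π)) :
    HasDerivAt (fun θ : ℝ => (circleWeight a θ : ℂ) * (exp (θ * I) - 1))
      (I * ((a + 1) * exp (θ * I) + a) * circleWeight a θ) θ := by
  have hbase : HasDerivAt (fun θ : ℝ => 2 - 2 * Real.cos θ) (2 * Real.sin θ) θ := by
    simpa using ((Real.hasDerivAt_cos θ).const_mul 2).const_sub 2
  have hw := (hbase.rpow_const (p := a) (Or.inl (two_sub_two_cos_pos h).ne')).ofReal_comp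
  have he : HasDerivAt (fun θ : ℝ => exp (θ * I)) (exp (θ * I) * I) θ := by
    simpa using ((hasDerivAt_id θ).ofReal_comp.mul_const I).cexp
  refine (hw.mul (he.sub_const 1)).congr_deriv ?_
  have hpow : (2 - 2 * Real.cos θ) ^ (a - 1) * (2 - 2 * Real.cos θ) =
      (2 - 2 * Real.cos θ) ^ a := by
    rw [← Real.rpow_add_one (two_sub_two_cos_pos h).ne', sub_add_cancel]
  have key := congrArg (fun x => (a : ℂ) * ((2 - 2 * Real.cos θ) ^ (a - 1) : ℝ) * x)
    (two_mul_sin_mul_exp_sub_one θ)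
  rw [circleWeight, ← hpow]
  push_cast at key ⊢
  linear_combination key

noncomputable def circleMoment (w : ℝ → ℝ) (m : ℂ) (p : ℂ[X]) : ℂ :=
  ∫ θ in (0:ℝ)..2 * π, p.eval (exp (θ * I)) * exp (m * θ * I) * (w θ : ℂ)

section circleMoment

variable {w : ℝ → ℝ}

theorem continuous_circleMoment_integrand (hw : Continuous w) (m : ℂ) (p : ℂ[X]) :
    Continuous fun θ : ℝ => p.eval (exp (θ * I)) * exp (m * θ * I) * (w θ : ℂ) := by
  fun_prop

theorem circleMoment_add (hw : Continuous w) (m : ℂ) (p q : ℂ[X]) :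
    circleMoment w m (p + q) = circleMoment w m p + circleMoment w m q := by
  rw [circleMoment, circleMoment, circleMoment, ← intervalIntegral.integral_add
    ((continuous_circleMoment_integrand hw m p).intervalIntegrable _ _)
    ((continuous_circleMoment_integrand hw m q).intervalIntegrable _ _)]
  simp only [eval_add, add_mul]

theorem circleMoment_sub (hw : Continuous w) (m : ℂ) (p q : ℂ[X]) :
    circleMoment w m (p - q) = circleMoment w m p - circleMoment w m q := by
  rw [circleMoment, circleMoment, circleMoment, ← intervalIntegral.integral_sub
    ((continuous_circleMoment_integrand hw m p).intervalIntegrable _ _)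
    ((continuous_circleMoment_integrand hw m q).intervalIntegrable _ _)]
  simp only [eval_sub, sub_mul]

theorem circleMoment_C_mul (m c : ℂ) (p : ℂ[X]) :
    circleMoment w m (C c * p) = c * circleMoment w m p := by
  simp only [circleMoment, eval_mul, eval_C, ← intervalIntegral.integral_const_mul, mul_assoc]

theorem circleMoment_X_mul (m : ℂ) (p : ℂ[X]) :
    circleMoment w m (X * p) = circleMoment w (m + 1) p := by
  simp only [circleMoment, eval_mul, eval_X, add_mul, one_mul, exp_add]
  congr 1; funext θ; ring

theorem ofReal_integral_normSq_mul_eq_sum (hw : Continuous w) {p : ℂ[X]} {n : ℕ}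
    (hp : p.natDegree < n) :
    ((∫ θ in (0:ℝ)..2 * π, normSq (p.eval (exp (θ * I))) * w θ : ℝ) : ℂ) =
      ∑ j ∈ Finset.range n, starRingEnd ℂ (p.coeff j) * circleMoment w (-j) p := by
  have hconj : ∀ θ : ℝ, starRingEnd ℂ (p.eval (exp (θ * I))) =
      ∑ j ∈ Finset.range n, starRingEnd ℂ (p.coeff j) * exp (-(j : ℂ) * θ * I) := by
    intro θ
    rw [eval_eq_sum_range' hp, map_sum]
    refine Finset.sum_congr rfl fun j _ => ?_
    rw [map_mul, map_pow, ← exp_conj, map_mul, conj_ofReal, conj_I, ← exp_nat_mul]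
    congr 2
    ring
  rw [← intervalIntegral.integral_ofReal]
  simp only [circleMoment, ← intervalIntegral.integral_const_mul]
  rw [← intervalIntegral.integral_finsetSum fun j _ =>
    ((continuous_circleMoment_integrand hw _ p).const_mul _).intervalIntegrable _ _]
  refine intervalIntegral.integral_congr fun θ _ => ?_
  push_cast
  rw [← mul_conj, hconj, Finset.mul_sum, Finset.sum_mul]
  exact Finset.sum_congr rfl fun j _ => by ring

theorem eq_zero_of_forall_circleMoment_eq_zero (hw : Continuous w) (hw₀ : ∀ θ, 0 ≤ w θ)
    (hw_pos : ∀ θ ∈ Ioo 0 (2 * π), 0 < w θ) {p : ℂ[X]} {n : ℕ} (hp : p.degree < n)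
    (horth : ∀ k < n, circleMoment w (-k) p = 0) : p = 0 := by
  by_contra hne
  obtain ⟨θ₀, hθ₀, hpθ₀⟩ : ∃ θ ∈ Ioo 0 (2 * π), p.eval (exp (θ * I)) ≠ 0 := by
    by_contra! hroots
    have hinj : InjOn (fun θ : ℝ => exp (θ * I)) (Ioo 0 (2 * π)) :=
      Subtype.val_injective.comp_injOn ((Circle.exp_injOn_Ico (by simp)).mono Ioo_subset_Ico_self)
    refine hne (eq_zero_of_infinite_isRoot p (Set.Infinite.mono ?_
      ((Ioo_infinite (by positivity)).image hinj)))
    rintro _ ⟨θ, hθ, rfl⟩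
    exact hroots θ hθ
  have hpos : 0 < ∫ θ in (0:ℝ)..2 * π, normSq (p.eval (exp (θ * I))) * w θ :=
    intervalIntegral.integral_pos (by positivity) (by fun_prop)
      (fun θ _ => mul_nonneg (normSq_nonneg _) (hw₀ θ))
      ⟨θ₀, Ioo_subset_Icc_self hθ₀, mul_pos (normSq_pos.2 hpθ₀) (hw_pos θ₀ hθ₀)⟩
  have hsum := ofReal_integral_normSq_mul_eq_sum hw ((natDegree_lt_iff_degree_lt hne).2 hp)
  rw [Finset.sum_eq_zero fun j hj => by rw [horth j (Finset.mem_range.1 hj), mul_zero]] at hsum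
  exact hpos.ne' (by exact_mod_cast hsum)

end circleMoment

theorem circleMoment_circleWeight_pearson {a : ℝ} (ha : 0 ≤ a) (m : ℂ) (p : ℂ[X]) :
    circleMoment (circleWeight a) m
      (X * (X - 1) * derivative p + (C (m + a + 1) * X + C (a - m)) * p) = 0 := by
  set F : ℝ → ℂ := fun θ => p.eval (exp (θ * I)) * exp (m * θ * I) *
    ((circleWeight a θ : ℂ) * (exp (θ * I) - 1))
  have hF : ∀ θ ∈ Ioo 0 (2 * π), HasDerivAt F (I * ((X * (X - 1) * derivative p +
      (C (m + a + 1) * X + C (a - m)) * p).eval (exp (θ * I)) * exp (m * θ * I) *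
        circleWeight a θ)) θ := by
    intro θ hθ
    have he : HasDerivAt (fun θ : ℝ => exp (θ * I)) (exp (θ * I) * I) θ := by
      simpa using ((hasDerivAt_id θ).ofReal_comp.mul_const I).cexp
    have hm : HasDerivAt (fun θ : ℝ => exp (m * θ * I)) (exp (m * θ * I) * (m * I)) θ := by
      simpa using (((hasDerivAt_id θ).ofReal_comp.const_mul m).mul_const I).cexp
    refine ((((p.hasDerivAt _).comp θ he).mul hm).mul
      (hasDerivAt_circleWeight_mul_exp_sub_one a hθ)).congr_deriv ?_
    simp only [Pi.mul_apply, Function.comp_apply, eval_add, eval_mul, eval_sub, eval_X, eval_C,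
      eval_one]
    ring
  have hw := continuous_circleWeight ha
  have hFTC := intervalIntegral.integral_eq_sub_of_hasDerivAt_of_le (by positivity)
    (by fun_prop : Continuous F).continuousOn hF
    (((continuous_circleMoment_integrand hw _ _).const_mul I).intervalIntegrable _ _)
  have hF0 : F 0 = 0 := by simp [F]
  have hF2π : F (2 * π) = 0 := by simp [F]
  rw [intervalIntegral.integral_const_mul, hF0, hF2π, sub_zero, mul_eq_zero] at hFTC
  exact hFTC.resolve_left I_ne_zero

theorem circleMoment_hypergeometricOp_eq_zero {a : ℝ} (ha : 0 ≤ a) {n : ℕ} {φ : ℂ[X]}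
    (horth : ∀ k < n, circleMoment (circleWeight a) (-k) φ = 0) {k : ℕ} (hk : k < n) :
    circleMoment (circleWeight a) (-k) (hypergeometricOp (-n : ℂ) (a + 1) (1 - n - a) φ) =
      0 := by
  have hw := continuous_circleWeight ha
  set c : ℂ := n - 1 - k
  set P₁ : ℂ[X] := X * (X - 1) * derivative (derivative φ) +
    (C (-(k : ℂ) + a + 1) * X + C (a - -(k : ℂ))) * derivative φ with hP₁
  set P₂ : ℂ[X] := X * (X - 1) * derivative φ +
    (C (-(k : ℂ) - 1 + a + 1) * X + C (a - (-(k : ℂ) - 1))) * φ with hP₂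
  -- `P₁` and `P₂` have vanishing moments by integration by parts, and the coefficient `c` of the
  -- only remaining moment, that of `φ` at `-(k + 1)`, vanishes exactly when `k + 1 = n`.
  have hpoly : X * hypergeometricOp (-n : ℂ) (a + 1) (1 - n - a) φ =
      X * P₁ - C c * P₂ + C (c * (a - k) - n * (a + 1)) * (X * φ) +
        C (c * (a + k + 1)) * φ := by
    simp only [hP₁, hP₂, c, hypergeometricOp, map_add, map_sub, map_mul, map_neg, map_one,
      map_natCast]
    ring
  have hP₁0 : circleMoment (circleWeight a) (-k) P₁ = 0 :=
    circleMoment_circleWeight_pearson ha _ _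
  have hP₂0 : circleMoment (circleWeight a) (-k - 1) P₂ = 0 :=
    circleMoment_circleWeight_pearson ha _ _
  have hlast : c * (a + k + 1) * circleMoment (circleWeight a) (-k - 1) φ = 0 := by
    rcases (Nat.succ_le_of_lt hk).eq_or_lt with h | h
    · simp [c, ← h]
    · have := horth (k + 1) h
      rw [Nat.cast_succ, neg_add'] at this
      rw [this, mul_zero]
  have h := congrArg (circleMoment (circleWeight a) (-k - 1)) hpoly
  simp only [circleMoment_add hw, circleMoment_sub hw, circleMoment_C_mul, circleMoment_X_mul,
    sub_add_cancel, hP₁0, hP₂0, horth k hk] at h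
  linear_combination h + hlast

theorem hypergeometricOp_eq_zero_of_isMonicOPUC {a : ℝ} (ha : 0 ≤ a) {n : ℕ} {φ : ℂ[X]}
    (hφ : IsMonicOPUC (circleWeight a) n φ) :
    hypergeometricOp (-n : ℂ) (a + 1) (1 - n - a) φ = 0 :=
  eq_zero_of_forall_circleMoment_eq_zero (continuous_circleWeight ha) (circleWeight_nonneg a)
    (fun _ => circleWeight_pos a)
    (degree_hypergeometricOp_lt _ _ (natDegree_le_of_degree_le hφ.2.1.le))
    (fun _ => circleMoment_hypergeometricOp_eq_zero ha hφ.2.2)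

theorem opuc_zeros_equilibrium_one_singularity_general
    (a : ℝ) (ha : 0 < a) (n : ℕ)
    (φ : Polynomial ℂ)
    (hφ : IsMonicOPUC (fun θ => (2 - 2 * Real.cos θ) ^ a) n φ)
    (z : Fin n → ℂ) (hzinj : Function.Injective z)
    (hroots : φ = ∏ j, (Polynomial.X - Polynomial.C (z j)))
    (hz0 : ∀ k, z k ≠ 0) (hz1 : ∀ k, z k ≠ 1) :
    ∀ k, (∑ j ∈ Finset.univ.erase k, 1 / (z k - z j)) +
      ((a : ℂ) + 1 / 2) / (z k - 1) -
      (((n : ℂ) + (a : ℂ) - 1) / 2) / z k = 0 := by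
  intro k
  have hH : hypergeometricOp (-n : ℂ) (a + 1) (1 - n - a) (Lagrange.nodal Finset.univ z) = 0 := by
    rw [Lagrange.nodal, ← hroots]
    exact hypergeometricOp_eq_zero_of_isMonicOPUC ha.le hφ
  have hrel := Lagrange.stieltjes_of_hypergeometricOp_nodal_eq_zero hH hzinj.injOn
    (Finset.mem_univ k)
  have hzk : z k ≠ 0 := hz0 k
  have hzk1 : z k - 1 ≠ 0 := sub_ne_zero.2 (hz1 k)
  field_simp
  linear_combination hrel

theorem opuc_zeros_equilibrium_one_singularity
    (a : ℝ) (ha : 0 < a) (n : ℕ) (hn : 1 ≤ n)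
    (φ : Polynomial ℂ)
    (hφ : IsMonicOPUC (fun θ => (2 - 2 * Real.cos θ) ^ a) n φ)
    (z : Fin n → ℂ) (hzinj : Function.Injective z)
    (hroots : φ = ∏ j, (Polynomial.X - Polynomial.C (z j)))
    (hz0 : ∀ k, z k ≠ 0) (hz1 : ∀ k, z k ≠ 1) :
    ∀ k, (∑ j ∈ Finset.univ.erase k, 1 / (z k - z j)) +
      ((a : ℂ) + 1 / 2) / (z k - 1) -
      (((n : ℂ) + (a : ℂ) - 1) / 2) / z k = 0 :=
  opuc_zeros_equilibrium_one_singularity_general a ha n φ hφ z hzinj hroots hz0 hz1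
end

section
/- Let a > 0 be a real number and n ≥ 1, and let φ_n be a monic OPUC of degree n for the weight w(θ) := |1 − e^{iθ}|^{2a} on [0, 2π]. Then φ_n satisfies the polynomial second-order differential equation X(X − 1)·φ_n''(X) + ((1 − n − a)(X − 1) + (2a + 1)X)·φ_n'(X) − n(a + 1)·φ_n(X) = 0 identically in ℂ[X]. -/
open Polynomial Complex

/-!
Write `M_k(q) = ∫ q(e^{iθ}) e^{-ikθ} w(θ) dθ` and `L` for the differential operator. The weight
vanishes at `0` and `2π` and satisfies `(e^{iθ} - 1) w'(θ) = i a (e^{iθ} + 1) w(θ)`, so integrating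
the derivative of `p(e^{iθ}) e^{-ikθ} (e^{iθ} - 1) w(θ)` over `[0, 2π]` gives
`M_k((z² - z) p' + ((a + 1 - k) z + a + k) p) = 0` for every polynomial `p`. Using this for `φ'`
at index `k` and for `φ` at index `k + 1` expresses `M_k(Lφ)` through `M_k(φ)` and
`(k + 1 - n) M_{k+1}(φ)`, so `M_k(Lφ) = 0` for all `k < n`. The coefficient of `z^n` in `Lφ`
vanishes as well, so `deg Lφ < n` and `Lφ` is orthogonal to itself: `∫ |Lφ(e^{iθ})|² w = 0`,
which forces `Lφ = 0` because `w > 0` on `(0, 2π)`.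
-/

open MeasureTheory Set

noncomputable section

namespace OPUC

def moment (w : ℝ → ℝ) (q : ℂ[X]) (k : ℕ) : ℂ :=
  ∫ θ in (0:ℝ)..(2 * Real.pi), q.eval (exp (θ * I)) * exp (-(k : ℂ) * θ * I) * (w θ : ℂ)

section Moments

variable {w : ℝ → ℝ}

lemma intervalIntegrable_moment_integrand (hw : Continuous w) (q : ℂ[X]) (k : ℕ) :
    IntervalIntegrable (fun θ : ℝ => q.eval (exp (θ * I)) * exp (-(k : ℂ) * θ * I) * (w θ : ℂ))
      volume 0 (2 * Real.pi) :=
  Continuous.intervalIntegrable (by fun_prop) _ _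

lemma moment_add (hw : Continuous w) (p q : ℂ[X]) (k : ℕ) :
    moment w (p + q) k = moment w p k + moment w q k := by
  simp only [moment, eval_add, add_mul]
  exact intervalIntegral.integral_add (intervalIntegrable_moment_integrand hw p k)
    (intervalIntegrable_moment_integrand hw q k)

lemma moment_sub (hw : Continuous w) (p q : ℂ[X]) (k : ℕ) :
    moment w (p - q) k = moment w p k - moment w q k := by
  simp only [moment, eval_sub, sub_mul]
  exact intervalIntegral.integral_sub (intervalIntegrable_moment_integrand hw p k)
    (intervalIntegrable_moment_integrand hw q k)

lemma moment_C_mul (c : ℂ) (q : ℂ[X]) (k : ℕ) : moment w (C c * q) k = c * moment w q k := by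
  simp only [moment, eval_mul, eval_C, mul_assoc, intervalIntegral.integral_const_mul]

lemma moment_X_mul (q : ℂ[X]) (k : ℕ) : moment w (X * q) (k + 1) = moment w q k := by
  refine intervalIntegral.integral_congr fun θ _ => ?_
  have : exp (θ * I) * exp (-((k + 1 : ℕ) : ℂ) * θ * I) = exp (-(k : ℂ) * θ * I) := by
    rw [← exp_add]; push_cast; ring_nf
  simp only [eval_mul, eval_X]
  linear_combination (q.eval (exp (θ * I)) * (w θ : ℂ)) * this

lemma starRingEnd_eval_exp_mul_I {q : ℂ[X]} {n : ℕ} (hq : q.natDegree < n) (θ : ℝ) :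
    starRingEnd ℂ (q.eval (exp (θ * I))) =
      ∑ k ∈ Finset.range n, starRingEnd ℂ (q.coeff k) * exp (-(k : ℂ) * θ * I) := by
  rw [eval_eq_sum_range' hq, map_sum]
  refine Finset.sum_congr rfl fun k _ => ?_
  rw [map_mul, map_pow, ← exp_conj, ← exp_nat_mul]
  simp only [map_mul, conj_ofReal, conj_I]
  ring_nf

lemma integral_normSq_mul_eq_sum_moment (hw : Continuous w) {q : ℂ[X]} {n : ℕ}
    (hq : q.natDegree < n) :
    ((∫ θ in (0:ℝ)..(2 * Real.pi), normSq (q.eval (exp (θ * I))) * w θ : ℝ) : ℂ) =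
      ∑ k ∈ Finset.range n, starRingEnd ℂ (q.coeff k) * moment w q k := by
  simp only [moment, ← intervalIntegral.integral_const_mul]
  rw [← intervalIntegral.integral_finsetSum
    fun k _ => (intervalIntegrable_moment_integrand hw q k).const_mul _,
    ← intervalIntegral.integral_ofReal]
  refine intervalIntegral.integral_congr fun θ _ => ?_
  rw [ofReal_mul, ← mul_conj, starRingEnd_eval_exp_mul_I hq, Finset.mul_sum, Finset.sum_mul]
  refine Finset.sum_congr rfl fun k _ => ?_
  ring

lemma eq_zero_of_integral_normSq_mul_eq_zero (hw : Continuous w) (hw₀ : 0 ≤ w)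
    (hpos : ∀ θ ∈ Ioo 0 (2 * Real.pi), 0 < w θ) {q : ℂ[X]}
    (h : ∫ θ in (0:ℝ)..(2 * Real.pi), normSq (q.eval (exp (θ * I))) * w θ = 0) : q = 0 := by
  set f : ℝ → ℝ := fun θ => normSq (q.eval (exp (θ * I))) * w θ
  have hf : Continuous f := by fun_prop
  have hf_ae : f =ᵐ[volume.restrict (Ioo 0 (2 * Real.pi))] 0 :=
    ae_restrict_of_ae_restrict_of_subset Ioo_subset_Ioc_self <|
      (intervalIntegral.integral_eq_zero_iff_of_le_of_nonneg_ae Real.two_pi_pos.le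
        (Filter.Eventually.of_forall fun θ => mul_nonneg (normSq_nonneg _) (hw₀ θ))
        (hf.intervalIntegrable _ _)).1 h
  have hroot : ∀ θ ∈ Ioo 0 (2 * Real.pi), q.IsRoot (exp (θ * I)) := fun θ hθ => by
    have := Measure.eqOn_open_of_ae_eq hf_ae isOpen_Ioo hf.continuousOn continuousOn_const hθ
    simpa [f, (hpos θ hθ).ne'] using this
  have hinj : InjOn (fun θ : ℝ => exp (θ * I)) (Ioo 0 (2 * Real.pi)) :=
    (Subtype.val_injective.comp_injOn (Circle.exp_injOn_Ico (by simp))).mono Ioo_subset_Ico_self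
  refine eq_zero_of_infinite_isRoot q
    (Set.Infinite.mono ?_ ((Ioo_infinite Real.two_pi_pos).image hinj))
  rintro _ ⟨θ, hθ, rfl⟩
  exact hroot θ hθ

lemma eq_zero_of_moment_eq_zero (hw : Continuous w) (hw₀ : 0 ≤ w)
    (hpos : ∀ θ ∈ Ioo 0 (2 * Real.pi), 0 < w θ) {q : ℂ[X]} {n : ℕ} (hq : q.degree < n)
    (h : ∀ k < n, moment w q k = 0) : q = 0 := by
  by_contra hq₀
  refine hq₀ (eq_zero_of_integral_normSq_mul_eq_zero hw hw₀ hpos ?_)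
  have hq' : q.natDegree < n := (natDegree_lt_iff_degree_lt hq₀).2 hq
  exact_mod_cast (integral_normSq_mul_eq_sum_moment hw hq').trans
    (Finset.sum_eq_zero fun k hk => by rw [h k (Finset.mem_range.1 hk), mul_zero])

end Moments

def circleJacobiWeight (a θ : ℝ) : ℝ := (2 - 2 * Real.cos θ) ^ a

section Weight

variable {a : ℝ}

lemma two_sub_two_cos_nonneg (θ : ℝ) : 0 ≤ 2 - 2 * Real.cos θ := by
  linarith [Real.cos_le_one θ]

lemma two_sub_two_cos_pos {θ : ℝ} (hθ : θ ∈ Ioo 0 (2 * Real.pi)) : 0 < 2 - 2 * Real.cos θ := by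
  have : Real.cos θ ≠ 1 := fun h =>
    hθ.1.ne' ((Real.cos_eq_one_iff_of_lt_of_lt (by linarith [hθ.1, Real.pi_pos]) hθ.2).1 h)
  linarith [lt_of_le_of_ne (Real.cos_le_one θ) this]

lemma circleJacobiWeight_nonneg : 0 ≤ circleJacobiWeight a :=
  fun θ => Real.rpow_nonneg (two_sub_two_cos_nonneg θ) a

lemma circleJacobiWeight_pos {θ : ℝ} (hθ : θ ∈ Ioo 0 (2 * Real.pi)) :
    0 < circleJacobiWeight a θ :=
  Real.rpow_pos_of_pos (two_sub_two_cos_pos hθ) a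

lemma continuous_circleJacobiWeight (ha : 0 ≤ a) : Continuous (circleJacobiWeight a) :=
  continuous_iff_continuousAt.2 fun _ =>
    (continuous_const.sub (continuous_const.mul Real.continuous_cos)).continuousAt.rpow_const
      (Or.inr ha)

lemma circleJacobiWeight_eq_zero_of_cos_eq_one (ha : a ≠ 0) {θ : ℝ} (hθ : Real.cos θ = 1) :
    circleJacobiWeight a θ = 0 := by
  simp [circleJacobiWeight, hθ, Real.zero_rpow ha]

lemma hasDerivAt_circleJacobiWeight {θ : ℝ} (hθ : θ ∈ Ioo 0 (2 * Real.pi)) :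
    HasDerivAt (circleJacobiWeight a)
      (a * (2 - 2 * Real.cos θ) ^ (a - 1) * (2 * Real.sin θ)) θ := by
  have hb : HasDerivAt (fun θ : ℝ => 2 - 2 * Real.cos θ) (2 * Real.sin θ) θ := by
    simpa using ((Real.hasDerivAt_cos θ).const_mul 2).const_sub 2
  unfold circleJacobiWeight
  simpa [mul_assoc, mul_comm, mul_left_comm] using
    hb.rpow_const (p := a) (Or.inl (two_sub_two_cos_pos hθ).ne')

lemma exp_sub_one_mul_deriv_circleJacobiWeight {θ : ℝ} (hθ : θ ∈ Ioo 0 (2 * Real.pi)) :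
    (exp (θ * I) - 1) * ((a * (2 - 2 * Real.cos θ) ^ (a - 1) * (2 * Real.sin θ) : ℝ) : ℂ) =
      I * a * (exp (θ * I) + 1) * (circleJacobiWeight a θ : ℂ) := by
  have hpow :
      (2 - 2 * Real.cos θ) ^ a = (2 - 2 * Real.cos θ) ^ (a - 1) * (2 - 2 * Real.cos θ) := by
    rw [← Real.rpow_add_one (two_sub_two_cos_pos hθ).ne', sub_add_cancel]
  rw [circleJacobiWeight, hpow, exp_mul_I]
  push_cast
  linear_combination (2 * a * ((2 - 2 * Real.cos θ) ^ (a - 1) : ℝ) : ℂ) *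
    (I * sin_sq_add_cos_sq (θ : ℂ) + (cos (θ : ℂ) * sin θ - sin θ) * I_sq)

end Weight

lemma hasDerivAt_exp_mul_I (c : ℂ) (θ : ℝ) :
    HasDerivAt (fun θ : ℝ => exp (c * θ * I)) (exp (c * θ * I) * (c * I)) θ := by
  simpa using (((hasDerivAt_id θ).ofReal_comp.const_mul c).mul_const I).cexp

lemma hasDerivAt_exp_ofReal_mul_I (θ : ℝ) :
    HasDerivAt (fun θ : ℝ => exp (θ * I)) (exp (θ * I) * I) θ := by
  simpa using hasDerivAt_exp_mul_I 1 θ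

lemma hasDerivAt_eval_exp_mul_I (p : ℂ[X]) (θ : ℝ) :
    HasDerivAt (fun θ : ℝ => p.eval (exp (θ * I)))
      ((derivative p).eval (exp (θ * I)) * (exp (θ * I) * I)) θ := by
  rw [mul_comm]
  exact HasDerivAt.scomp θ (p.hasDerivAt _) (hasDerivAt_exp_ofReal_mul_I θ)

def ibpPoly (a : ℝ) (k : ℕ) (p : ℂ[X]) : ℂ[X] :=
  (X ^ 2 - X) * derivative p + (C ((a : ℂ) + 1 - k) * X + C ((a : ℂ) + k)) * p

section IntegrationByParts

variable {a : ℝ}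

lemma hasDerivAt_primitive_ibpPoly (p : ℂ[X]) (k : ℕ) {θ : ℝ} (hθ : θ ∈ Ioo 0 (2 * Real.pi)) :
    HasDerivAt
      (fun θ : ℝ => p.eval (exp (θ * I)) * exp (-(k : ℂ) * θ * I) * (exp (θ * I) - 1) *
        (circleJacobiWeight a θ : ℂ))
      (I * ((ibpPoly a k p).eval (exp (θ * I)) * exp (-(k : ℂ) * θ * I) *
        (circleJacobiWeight a θ : ℂ))) θ := by
  have hD := (((hasDerivAt_eval_exp_mul_I p θ).mul (hasDerivAt_exp_mul_I (-k) θ)).mul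
    ((hasDerivAt_exp_ofReal_mul_I θ).sub_const 1)).mul
    (hasDerivAt_circleJacobiWeight (a := a) hθ).ofReal_comp
  refine hD.congr_deriv ?_
  simp only [Pi.mul_apply, ibpPoly, eval_add, eval_mul, eval_sub, eval_pow, eval_X, eval_C]
  linear_combination p.eval (exp (θ * I)) * exp (-(k : ℂ) * θ * I) *
    exp_sub_one_mul_deriv_circleJacobiWeight (a := a) hθ

lemma moment_ibpPoly (ha : 0 < a) (p : ℂ[X]) (k : ℕ) :
    moment (circleJacobiWeight a) (ibpPoly a k p) k = 0 := by
  have hw := continuous_circleJacobiWeight ha.le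
  have hftc := intervalIntegral.integral_eq_sub_of_hasDeriv_right_of_le Real.two_pi_pos.le
    (Continuous.continuousOn (by fun_prop))
    (fun θ hθ => (hasDerivAt_primitive_ibpPoly (a := a) p k hθ).hasDerivWithinAt)
    ((intervalIntegrable_moment_integrand hw _ k).const_mul I)
  simp only [circleJacobiWeight_eq_zero_of_cos_eq_one ha.ne' Real.cos_zero,
    circleJacobiWeight_eq_zero_of_cos_eq_one ha.ne' Real.cos_two_pi, ofReal_zero, mul_zero,
    sub_zero, intervalIntegral.integral_const_mul] at hftc
  exact (mul_eq_zero.1 hftc).resolve_left I_ne_zero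

end IntegrationByParts

def odeOperator (a : ℝ) (n : ℕ) (φ : ℂ[X]) : ℂ[X] :=
  X * (X - 1) * derivative (derivative φ) +
    (C ((1 : ℂ) - (n : ℂ) - (a : ℂ)) * (X - 1) + C (2 * (a : ℂ) + 1) * X) * derivative φ -
    C ((n : ℂ) * ((a : ℂ) + 1)) * φ

section OdeOperator

variable {a : ℝ} {n : ℕ} {φ : ℂ[X]}

lemma coeff_odeOperator (j : ℕ) :
    (odeOperator a n φ).coeff j =
      ((j : ℂ) - n) * (j + 1 + a) * φ.coeff j - (j + 1) * (j + 1 - n - a) * φ.coeff (j + 1) := by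
  rcases j with _ | _ | j <;>
    simp [odeOperator, mul_sub, sub_mul, add_mul, mul_assoc, coeff_derivative, coeff_X_mul,
      coeff_C_mul] <;>
    ring

lemma degree_odeOperator_lt (hφ : φ.natDegree ≤ n) : (odeOperator a n φ).degree < n := by
  refine (degree_lt_iff_coeff_zero _ _).2 fun j hj => ?_
  rw [coeff_odeOperator, coeff_eq_zero_of_natDegree_lt (by omega : φ.natDegree < j + 1)]
  rcases hj.eq_or_lt with rfl | hj
  · simp
  · simp [coeff_eq_zero_of_natDegree_lt (hφ.trans_lt hj)]

lemma odeOperator_eq_ibpPoly (k : ℕ) :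
    odeOperator a n φ = ibpPoly a k (derivative φ) +
      C ((k : ℂ) + 1 - n) * ((X - 1) * derivative φ) - C ((n : ℂ) * (a + 1)) * φ := by
  simp only [odeOperator, ibpPoly, map_add, map_sub, map_mul, map_one, map_natCast, map_ofNat]
  ring

lemma X_mul_X_sub_one_mul_derivative (p : ℂ[X]) (k : ℕ) :
    X * ((X - 1) * derivative p) =
      ibpPoly a (k + 1) p - C ((a : ℂ) - k) * (X * p) - C ((a : ℂ) + k + 1) * p := by
  simp only [ibpPoly, map_add, map_sub, map_one, map_natCast, Nat.cast_succ]
  ring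

lemma moment_X_sub_one_mul_derivative (ha : 0 < a) (p : ℂ[X]) (k : ℕ) :
    moment (circleJacobiWeight a) ((X - 1) * derivative p) k =
      -((a - k) * moment (circleJacobiWeight a) p k) -
        (a + k + 1) * moment (circleJacobiWeight a) p (k + 1) := by
  have hw := continuous_circleJacobiWeight ha.le
  rw [← moment_X_mul, X_mul_X_sub_one_mul_derivative (a := a) p k, moment_sub hw, moment_sub hw,
    moment_C_mul, moment_C_mul, moment_ibpPoly ha, moment_X_mul]
  ring

lemma moment_odeOperator (ha : 0 < a) (k : ℕ) :
    moment (circleJacobiWeight a) (odeOperator a n φ) k =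
      ((k : ℂ) + 1 - n) * (-((a - k) * moment (circleJacobiWeight a) φ k) -
        (a + k + 1) * moment (circleJacobiWeight a) φ (k + 1)) -
      n * (a + 1) * moment (circleJacobiWeight a) φ k := by
  have hw := continuous_circleJacobiWeight ha.le
  rw [odeOperator_eq_ibpPoly k, moment_sub hw, moment_add hw, moment_C_mul, moment_C_mul,
    moment_ibpPoly ha, moment_X_sub_one_mul_derivative ha]
  ring

lemma moment_odeOperator_eq_zero (ha : 0 < a)
    (hφ : ∀ k < n, moment (circleJacobiWeight a) φ k = 0) {k : ℕ} (hk : k < n) :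
    moment (circleJacobiWeight a) (odeOperator a n φ) k = 0 := by
  rw [moment_odeOperator ha, hφ k hk]
  rcases (Nat.succ_le_of_lt hk).eq_or_lt with rfl | hk'
  · push_cast; ring
  · rw [hφ (k + 1) hk']; ring

end OdeOperator

end OPUC

open OPUC

theorem opuc_second_order_ode_general
    (a : ℝ) (ha : 0 < a) (n : ℕ)
    (φ : Polynomial ℂ)
    (hφ : IsMonicOPUC (fun θ => (2 - 2 * Real.cos θ) ^ a) n φ) :
    Polynomial.X * (Polynomial.X - 1) * Polynomial.derivative (Polynomial.derivative φ) +
      (Polynomial.C ((1 : ℂ) - (n : ℂ) - (a : ℂ)) * (Polynomial.X - 1) +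
        Polynomial.C (2 * (a : ℂ) + 1) * Polynomial.X) * Polynomial.derivative φ -
      Polynomial.C ((n : ℂ) * ((a : ℂ) + 1)) * φ = 0 := by
  obtain ⟨-, hdeg, horth⟩ := hφ
  change odeOperator a n φ = 0
  exact eq_zero_of_moment_eq_zero (continuous_circleJacobiWeight ha.le)
    circleJacobiWeight_nonneg (fun θ hθ => circleJacobiWeight_pos hθ)
    (degree_odeOperator_lt (natDegree_le_of_degree_le hdeg.le))
    (fun k hk => moment_odeOperator_eq_zero ha horth hk)

theorem opuc_second_order_ode
    (a : ℝ) (ha : 0 < a) (n : ℕ) (hn : 1 ≤ n)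
    (φ : Polynomial ℂ)
    (hφ : IsMonicOPUC (fun θ => (2 - 2 * Real.cos θ) ^ a) n φ) :
    Polynomial.X * (Polynomial.X - 1) * Polynomial.derivative (Polynomial.derivative φ) +
      (Polynomial.C ((1 : ℂ) - (n : ℂ) - (a : ℂ)) * (Polynomial.X - 1) +
        Polynomial.C (2 * (a : ℂ) + 1) * Polynomial.X) * Polynomial.derivative φ -
      Polynomial.C ((n : ℂ) * ((a : ℂ) + 1)) * φ = 0 :=
  opuc_second_order_ode_general a ha n φ hφ
end
end

section
/- Let k, l be coprime positive integers with θ := kπ/l ∈ (0, π/2], and fix n' ∈ {0, 1, …, 2l − 1}. Suppose t_0, t_1, t_2, t_3 : ℕ → ℂ are functions such that for every n ∈ ℕ with n ≡ n' (mod 2l) the polynomial Q_n(X) := t_0(n) + t_1(n)·X + X^{n+2} + t_2(n)·X^{n+3} + t_3(n)·X^{n+4} has a zero of multiplicity at least 2 at e^{iθ} and a zero of multiplicity at least 2 at e^{−iθ}. Then, as n → ∞ along the arithmetic progression n ≡ n' (mod 2l): t_3(n) = 1 − 2/n + O(n^{−2}), t_2(n) = −2cos θ + (2cos θ)/n + O(n^{−2}),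 t_1(n) = (2cos((n'+3)θ))/n + O(n^{−2}), and t_0(n) = −(2cos((n'+2)θ))/n + O(n^{−2}). -/
/-!
Put `u = e^{iθ}`. Since `u^{2l} = 1`, `u^n = u^{n'}` along the progression, so the conditions
`Q_n(u^{±1}) = Q_n'(u^{±1}) = 0`, with the derivative equations divided by `n`, form a linear system
`(A₀ + n⁻¹ A₁) t = y₀ + n⁻¹ y₁` in `t = (t₀, t₁, t₂, t₃)` whose data do not depend on `n`.
The limit matrix `A₀` is invertible because `u ≠ u⁻¹`, and a solution of such a perturbed
system is `x₀ + n⁻¹ x₁ + O(n⁻²)`, where `A₀ x₀ = y₀` and `A₀ x₁ + A₁ x₀ = y₁`.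
Solving these two systems gives the four expansions.
-/

open Polynomial Complex Filter

/-- The family of polynomials `Q_n(X) = t₀(n) + t₁(n)X + X^{n+2} + t₂(n)X^{n+3} + t₃(n)X^{n+4}`. -/
noncomputable def Qfam (t0 t1 t2 t3 : ℕ → ℂ) (n : ℕ) : Polynomial ℂ :=
  Polynomial.C (t0 n) + Polynomial.C (t1 n) * Polynomial.X + Polynomial.X ^ (n + 2) +
    Polynomial.C (t2 n) * Polynomial.X ^ (n + 3) + Polynomial.C (t3 n) * Polynomial.X ^ (n + 4)

open Topology Asymptotics Matrix NNReal

section Perturbation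

variable {ι 𝕜 E F : Type*} [NontriviallyNormedField 𝕜] [NormedAddCommGroup E] [NormedSpace 𝕜 E]
  [NormedAddCommGroup F] [NormedSpace 𝕜 F] {l : Filter ι} {ε : ι → 𝕜} {K : ℝ≥0}
  {A₀ A₁ : E →L[𝕜] F}

theorem isBigO_sq_of_perturbed_eq_sq_smul (hA₀ : AntilipschitzWith K A₀)
    (hε : Tendsto ε l (𝓝 0)) {r : ι → E} {v : F}
    (hr : ∀ᶠ i in l, A₀ (r i) + ε i • A₁ (r i) = ε i ^ 2 • v) :
    r =O[l] fun i => ε i ^ 2 := by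
  have hsmall : ∀ᶠ i in l, K * ‖A₁‖ * ‖ε i‖ ≤ 1 / 2 := by
    have : Tendsto (fun i => K * ‖A₁‖ * ‖ε i‖) l (𝓝 0) := by
      simpa using hε.norm.const_mul (K * ‖A₁‖)
    exact this.eventually (ge_mem_nhds (by norm_num))
  refine IsBigO.of_bound (2 * K * ‖v‖) ?_
  filter_upwards [hr, hsmall] with i hri hi
  have hA₁ : ‖A₁ (r i)‖ ≤ ‖A₁‖ * ‖r i‖ := A₁.le_opNorm _
  have key : ‖r i‖ ≤ K * ‖ε i ^ 2‖ * ‖v‖ + K * ‖A₁‖ * ‖ε i‖ * ‖r i‖ := calc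
    ‖r i‖ ≤ K * ‖A₀ (r i)‖ := A₀.bound_of_antilipschitz hA₀ _
    _ = K * ‖ε i ^ 2 • v - ε i • A₁ (r i)‖ := by rw [eq_sub_of_add_eq hri]
    _ ≤ K * (‖ε i ^ 2‖ * ‖v‖ + ‖ε i‖ * (‖A₁‖ * ‖r i‖)) := by
      gcongr
      refine (norm_sub_le _ _).trans ?_
      rw [norm_smul, norm_smul]
      gcongr
    _ = K * ‖ε i ^ 2‖ * ‖v‖ + K * ‖A₁‖ * ‖ε i‖ * ‖r i‖ := by ring
  linarith [mul_le_mul_of_nonneg_right hi (norm_nonneg (r i))]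

theorem isBigO_sq_of_perturbed_eq (hA₀ : AntilipschitzWith K A₀) (hε : Tendsto ε l (𝓝 0))
    {x : ι → E} {x₀ x₁ : E} {y₀ y₁ : F}
    (hx : ∀ᶠ i in l, A₀ (x i) + ε i • A₁ (x i) = y₀ + ε i • y₁)
    (h₀ : A₀ x₀ = y₀) (h₁ : A₀ x₁ + A₁ x₀ = y₁) :
    (fun i => x i - x₀ - ε i • x₁) =O[l] fun i => ε i ^ 2 := by
  refine isBigO_sq_of_perturbed_eq_sq_smul hA₀ hε (A₁ := A₁) (v := -A₁ x₁) ?_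
  filter_upwards [hx] with i hxi
  subst h₀ h₁
  simp only [map_sub, map_smul]
  linear_combination (norm := module) hxi

end Perturbation

section Qfam

variable (t0 t1 t2 t3 : ℕ → ℂ) (n : ℕ) (z : ℂ)

theorem Qfam_eval :
    (Qfam t0 t1 t2 t3 n).eval z =
      t0 n + t1 n * z + z ^ n * (z ^ 2 + t2 n * z ^ 3 + t3 n * z ^ 4) := by
  simp only [Qfam, eval_add, eval_mul, eval_pow, eval_C, eval_X]
  ring

theorem Qfam_derivative_eval :
    (derivative (Qfam t0 t1 t2 t3 n)).eval z =
      t1 n + z ^ n * ((n + 2) * z + (n + 3) * t2 n * z ^ 2 + (n + 4) * t3 n * z ^ 3) := by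
  simp only [Qfam, derivative_add, derivative_C, derivative_C_mul, derivative_X,
    derivative_X_pow, eval_add, eval_mul, eval_pow, eval_C, eval_X, eval_one,
    zero_add, show n + 3 - 1 = n + 2 by omega, show n + 4 - 1 = n + 3 by omega]
  push_cast
  ring

end Qfam

theorem eq_zero_and_eq_zero_of_add_mul_eq_zero {R : Type*} [CommRing R] [IsDomain R]
    {u U a b : R} (hne : u ≠ U) (h : a + u * b = 0) (h' : a + U * b = 0) : a = 0 ∧ b = 0 := by
  have hb : b = 0 := by
    refine (mul_eq_zero.mp ?_).resolve_left (sub_ne_zero.mpr hne)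
    linear_combination h - h'
  exact ⟨by simpa [hb] using h, hb⟩

section DoubleZeroSystem

variable (u U p P : ℂ)

/- The rows encode `Q(u) = 0`, `Q'(u)/n = 0`, `Q(U) = 0`, `Q'(U)/n = 0` in the unknowns
`(t₀, t₁, t₂, t₃)` once `u^n = p` and `U^n = P`; the `₀` parts collect the terms free of `n⁻¹`
and the `₁` parts the coefficients of `n⁻¹`. -/
def doubleZeroMatrix₀ : Matrix (Fin 4) (Fin 4) ℂ :=
  !![1, u, p * u ^ 3, p * u ^ 4;
     0, 0, p * u ^ 2, p * u ^ 3;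
     1, U, P * U ^ 3, P * U ^ 4;
     0, 0, P * U ^ 2, P * U ^ 3]

def doubleZeroMatrix₁ : Matrix (Fin 4) (Fin 4) ℂ :=
  !![0, 0, 0, 0;
     0, 1, 3 * p * u ^ 2, 4 * p * u ^ 3;
     0, 0, 0, 0;
     0, 1, 3 * P * U ^ 2, 4 * P * U ^ 3]

def doubleZeroRhs₀ : Fin 4 → ℂ := ![-(p * u ^ 2), -(p * u), -(P * U ^ 2), -(P * U)]

def doubleZeroRhs₁ : Fin 4 → ℂ := ![0, -(2 * p * u), 0, -(2 * P * U)]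

theorem doubleZero_system {t0 t1 t2 t3 : ℕ → ℂ} {n : ℕ} (hn : (n : ℂ) ≠ 0)
    (hu : u ^ n = p) (hU : U ^ n = P)
    (h : (Qfam t0 t1 t2 t3 n).eval u = 0 ∧ (derivative (Qfam t0 t1 t2 t3 n)).eval u = 0 ∧
      (Qfam t0 t1 t2 t3 n).eval U = 0 ∧ (derivative (Qfam t0 t1 t2 t3 n)).eval U = 0) :
    doubleZeroMatrix₀ u U p P *ᵥ ![t0 n, t1 n, t2 n, t3 n] +
        (n : ℂ)⁻¹ • (doubleZeroMatrix₁ u U p P *ᵥ ![t0 n, t1 n, t2 n, t3 n]) =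
      doubleZeroRhs₀ u U p P + (n : ℂ)⁻¹ • doubleZeroRhs₁ u U p P := by
  obtain ⟨h₁, h₂, h₃, h₄⟩ := h
  rw [Qfam_eval, hu] at h₁
  rw [Qfam_eval, hU] at h₃
  rw [Qfam_derivative_eval, hu] at h₂
  rw [Qfam_derivative_eval, hU] at h₄
  ext i
  fin_cases i <;>
    simp only [doubleZeroMatrix₀, doubleZeroMatrix₁, doubleZeroRhs₀, doubleZeroRhs₁,
      mulVec_cons, mulVec_empty, Pi.add_apply, Pi.smul_apply, smul_eq_mul, Function.comp_apply,
      Fin.reduceFinMk, Fin.isValue, Fin.zero_eta, Fin.mk_one, cons_val, cons_val_zero,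
      cons_val_one, head_cons, tail_cons, smul_cons, add_zero, mul_zero] <;>
    field_simp
  · linear_combination h₁
  · linear_combination h₂
  · linear_combination h₃
  · linear_combination h₄

theorem doubleZeroMatrix₀_mulVec_injective (huU : u * U = 1) (hne : u ≠ U) (hp : p ≠ 0)
    (hP : P ≠ 0) : Function.Injective (doubleZeroMatrix₀ u U p P).mulVec := by
  have hu : u ≠ 0 := left_ne_zero_of_mul_eq_one huU
  have hU : U ≠ 0 := right_ne_zero_of_mul_eq_one huU
  rw [← coe_mulVecLin, ← LinearMap.ker_eq_bot, LinearMap.ker_eq_bot']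
  intro x hx
  have e₀ := congrFun hx 0
  have e₁ := congrFun hx 1
  have e₂ := congrFun hx 2
  have e₃ := congrFun hx 3
  simp only [doubleZeroMatrix₀, mulVecLin_apply, cons_mulVec, cons_dotProduct, empty_mulVec,
    dotProduct_of_isEmpty, vecHead, vecTail, Function.comp_apply, Fin.succ_zero_eq_one,
    Fin.succ_one_eq_two, Fin.reduceSucc, Fin.isValue, cons_val_zero, cons_val_one, cons_val,
    Pi.zero_apply, one_mul, zero_mul, add_zero, zero_add] at e₀ e₁ e₂ e₃
  have h₁ : x 2 + u * x 3 = 0 := by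
    refine (mul_eq_zero.mp ?_).resolve_left (mul_ne_zero hp (pow_ne_zero 2 hu))
    linear_combination e₁
  have h₃ : x 2 + U * x 3 = 0 := by
    refine (mul_eq_zero.mp ?_).resolve_left (mul_ne_zero hP (pow_ne_zero 2 hU))
    linear_combination e₃
  obtain ⟨hx₂, hx₃⟩ := eq_zero_and_eq_zero_of_add_mul_eq_zero hne h₁ h₃
  obtain ⟨hx₀, hx₁⟩ := eq_zero_and_eq_zero_of_add_mul_eq_zero hne
    (by simpa [hx₂, hx₃] using e₀) (by simpa [hx₂, hx₃] using e₂)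
  ext i
  fin_cases i <;> assumption

-- The limit polynomial is `X^{n+2} (X - u) (X - U)`.
def doubleZeroSolution₀ : Fin 4 → ℂ := ![0, 0, -(u + U), 1]

def doubleZeroSolution₁ : Fin 4 → ℂ :=
  ![-(p * u ^ 2 + P * U ^ 2), p * u ^ 3 + P * U ^ 3, u + U, -2]

theorem doubleZeroSolution₀_spec (huU : u * U = 1) :
    doubleZeroMatrix₀ u U p P *ᵥ doubleZeroSolution₀ u U = doubleZeroRhs₀ u U p P := by
  ext i
  obtain rfl : U = u⁻¹ := eq_inv_of_mul_eq_one_right huU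
  have hu : u ≠ 0 := left_ne_zero_of_mul_eq_one huU
  fin_cases i <;>
    simp only [doubleZeroMatrix₀, doubleZeroSolution₀, doubleZeroRhs₀,
      mulVec_cons, mulVec_empty, Pi.add_apply, Pi.smul_apply, smul_eq_mul, Function.comp_apply,
      Fin.reduceFinMk, Fin.isValue, Fin.zero_eta, Fin.mk_one, cons_val, cons_val_zero,
      cons_val_one, head_cons, tail_cons, add_zero, mul_zero] <;>
    field_simp <;> ring

theorem doubleZeroSolution₁_spec (huU : u * U = 1) :
    doubleZeroMatrix₀ u U p P *ᵥ doubleZeroSolution₁ u U p P +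
      doubleZeroMatrix₁ u U p P *ᵥ doubleZeroSolution₀ u U = doubleZeroRhs₁ u U p P := by
  ext i
  obtain rfl : U = u⁻¹ := eq_inv_of_mul_eq_one_right huU
  have hu : u ≠ 0 := left_ne_zero_of_mul_eq_one huU
  fin_cases i <;>
    simp only [doubleZeroMatrix₀, doubleZeroMatrix₁, doubleZeroSolution₀, doubleZeroSolution₁,
      doubleZeroRhs₁, mulVec_cons, mulVec_empty, Pi.add_apply, Pi.smul_apply, smul_eq_mul,
      Function.comp_apply, Fin.reduceFinMk, Fin.isValue, Fin.zero_eta, Fin.mk_one, cons_val,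
      cons_val_zero, cons_val_one, head_cons, tail_cons, add_zero, mul_zero] <;>
    field_simp <;> ring

end DoubleZeroSystem

theorem Qfam_coeffs_sub_isBigO {l : Filter ℕ} (hl : l ≤ atTop) {u U p P : ℂ} (huU : u * U = 1)
    (hne : u ≠ U) (hp : p ≠ 0) (hP : P ≠ 0) {t0 t1 t2 t3 : ℕ → ℂ}
    (hpow : ∀ᶠ n in l, u ^ n = p ∧ U ^ n = P)
    (hzero : ∀ᶠ n in l, (Qfam t0 t1 t2 t3 n).eval u = 0 ∧
      (derivative (Qfam t0 t1 t2 t3 n)).eval u = 0 ∧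
      (Qfam t0 t1 t2 t3 n).eval U = 0 ∧ (derivative (Qfam t0 t1 t2 t3 n)).eval U = 0) :
    (fun n : ℕ => ![t0 n, t1 n, t2 n, t3 n] - doubleZeroSolution₀ u U -
      (n : ℂ)⁻¹ • doubleZeroSolution₁ u U p P) =O[l] fun n => (n : ℂ)⁻¹ ^ 2 := by
  obtain ⟨K, -, hK⟩ := (doubleZeroMatrix₀ u U p P).mulVecLin.injective_iff_antilipschitz.mp
    (doubleZeroMatrix₀_mulVec_injective u U p P huU hne hp hP)
  refine isBigO_sq_of_perturbed_eq
    (A₀ := LinearMap.toContinuousLinearMap (doubleZeroMatrix₀ u U p P).mulVecLin)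
    (A₁ := LinearMap.toContinuousLinearMap (doubleZeroMatrix₁ u U p P).mulVecLin) hK
    ((tendsto_inv_atTop_nhds_zero_nat (𝕜 := ℂ)).mono_left hl) ?_
    (doubleZeroSolution₀_spec u U p P huU) (doubleZeroSolution₁_spec u U p P huU)
  filter_upwards [hpow, hzero, hl (eventually_ne_atTop 0)] with n ⟨hu, hU⟩ hn hn0
  exact doubleZero_system u U p P (Nat.cast_ne_zero.mpr hn0) hu hU hn

theorem Qfam_coeffs_isBigO {l : Filter ℕ} (hl : l ≤ atTop) {u U p P : ℂ} (huU : u * U = 1)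
    (hne : u ≠ U) (hp : p ≠ 0) (hP : P ≠ 0) {t0 t1 t2 t3 : ℕ → ℂ}
    (hpow : ∀ᶠ n in l, u ^ n = p ∧ U ^ n = P)
    (hzero : ∀ᶠ n in l, (Qfam t0 t1 t2 t3 n).eval u = 0 ∧
      (derivative (Qfam t0 t1 t2 t3 n)).eval u = 0 ∧
      (Qfam t0 t1 t2 t3 n).eval U = 0 ∧ (derivative (Qfam t0 t1 t2 t3 n)).eval U = 0) :
    (fun n : ℕ => t3 n - (1 - 2 / (n : ℂ))) =O[l] (fun n : ℕ => ((n : ℝ) ^ 2)⁻¹) ∧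
    (fun n : ℕ => t2 n - (-(u + U) + (u + U) / (n : ℂ))) =O[l] (fun n : ℕ => ((n : ℝ) ^ 2)⁻¹) ∧
    (fun n : ℕ => t1 n - (p * u ^ 3 + P * U ^ 3) / (n : ℂ)) =O[l]
      (fun n : ℕ => ((n : ℝ) ^ 2)⁻¹) ∧
    (fun n : ℕ => t0 n + (p * u ^ 2 + P * U ^ 2) / (n : ℂ)) =O[l]
      (fun n : ℕ => ((n : ℝ) ^ 2)⁻¹) := by
  have h := (Qfam_coeffs_sub_isBigO hl huU hne hp hP hpow hzero).trans
    (isBigO_of_le l (g := fun n : ℕ => ((n : ℝ) ^ 2)⁻¹) fun n => by simp)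
  rw [isBigO_pi] at h
  refine ⟨(h 3).congr_left ?_, (h 2).congr_left ?_, (h 1).congr_left ?_,
    (h 0).congr_left ?_⟩ <;> intro n <;>
    simp only [doubleZeroSolution₀, doubleZeroSolution₁, Pi.sub_apply, smul_eq_mul, Fin.isValue,
      cons_val, cons_val_zero, cons_val_one, smul_cons] <;>
    ring

theorem two_mul_cos_add_nat_mul (θ : ℝ) (a m : ℕ) :
    2 * (Real.cos ((a + m) * θ) : ℂ) =
      exp (θ * I) ^ a * exp (θ * I) ^ m + exp (-θ * I) ^ a * exp (-θ * I) ^ m := by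
  rw [← pow_add, ← pow_add, ← exp_nat_mul, ← exp_nat_mul, ofReal_cos, two_cos]
  push_cast
  ring_nf

theorem exp_mul_I_ne_exp_neg_mul_I {θ : ℝ} (h : Real.sin θ ≠ 0) :
    exp (θ * I) ≠ exp (-θ * I) := by
  intro h'
  have him := congrArg Complex.im h'
  rw [show -(θ : ℂ) * I = ((-θ : ℝ) : ℂ) * I by push_cast; ring, exp_ofReal_mul_I_im,
    exp_ofReal_mul_I_im, Real.sin_neg] at him
  exact h (by linarith)

theorem exp_mul_I_pow_eq_one {k l : ℕ} (hl : l ≠ 0) {θ : ℝ} (hθ : θ = k * Real.pi / l) :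
    exp (θ * I) ^ (2 * l) = 1 := by
  rw [← Complex.exp_nat_mul, ← Complex.exp_nat_mul_two_pi_mul_I k, hθ]
  congr 1
  push_cast
  field_simp

theorem coeff_asymptotics_general
    (k l : ℕ) (hl : 0 < l)
    (θ : ℝ) (hθ : θ = k * Real.pi / l) (hθI : θ ∈ Set.Ioc 0 (Real.pi / 2))
    (n' : ℕ)
    (t0 t1 t2 t3 : ℕ → ℂ)
    (hdouble : ∀ n : ℕ, n % (2 * l) = n' →
      (Qfam t0 t1 t2 t3 n).eval (Complex.exp (θ * Complex.I)) = 0 ∧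
      (Polynomial.derivative (Qfam t0 t1 t2 t3 n)).eval (Complex.exp (θ * Complex.I)) = 0 ∧
      (Qfam t0 t1 t2 t3 n).eval (Complex.exp (-θ * Complex.I)) = 0 ∧
      (Polynomial.derivative (Qfam t0 t1 t2 t3 n)).eval (Complex.exp (-θ * Complex.I)) = 0) :
    Asymptotics.IsBigO (atTop ⊓ Filter.principal {n : ℕ | n % (2 * l) = n'})
      (fun n : ℕ => t3 n - (1 - 2 / (n : ℂ))) (fun n : ℕ => ((n : ℝ) ^ 2)⁻¹) ∧
    Asymptotics.IsBigO (atTop ⊓ Filter.principal {n : ℕ | n % (2 * l) = n'})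
      (fun n : ℕ => t2 n - (-2 * (Real.cos θ : ℂ) + 2 * (Real.cos θ : ℂ) / (n : ℂ)))
      (fun n : ℕ => ((n : ℝ) ^ 2)⁻¹) ∧
    Asymptotics.IsBigO (atTop ⊓ Filter.principal {n : ℕ | n % (2 * l) = n'})
      (fun n : ℕ => t1 n - 2 * (Real.cos ((n' + 3) * θ) : ℂ) / (n : ℂ))
      (fun n : ℕ => ((n : ℝ) ^ 2)⁻¹) ∧
    Asymptotics.IsBigO (atTop ⊓ Filter.principal {n : ℕ | n % (2 * l) = n'})
      (fun n : ℕ => t0 n + 2 * (Real.cos ((n' + 2) * θ) : ℂ) / (n : ℂ))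
      (fun n : ℕ => ((n : ℝ) ^ 2)⁻¹) := by
  set u := exp (θ * I)
  set U := exp (-θ * I)
  have huU : u * U = 1 := by rw [← Complex.exp_add]; simp
  have hne : u ≠ U := exp_mul_I_ne_exp_neg_mul_I
    (Real.sin_pos_of_pos_of_lt_pi hθI.1 (by linarith [hθI.2, Real.pi_pos])).ne'
  have hu : u ^ (2 * l) = 1 := exp_mul_I_pow_eq_one hl.ne' hθ
  have hU : U ^ (2 * l) = 1 := by simpa [mul_pow, hu] using congrArg (· ^ (2 * l)) huU
  have hpow : ∀ᶠ n in atTop ⊓ 𝓟 {n : ℕ | n % (2 * l) = n'}, u ^ n = u ^ n' ∧ U ^ n = U ^ n' :=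
    eventually_inf_principal.mpr <| .of_forall fun n hn => by
      rw [pow_eq_pow_mod n hu, pow_eq_pow_mod n hU, hn]
      exact ⟨rfl, rfl⟩
  obtain ⟨h3, h2, h1, h0⟩ := Qfam_coeffs_isBigO inf_le_left huU hne
    (pow_ne_zero _ (exp_ne_zero _)) (pow_ne_zero _ (exp_ne_zero _)) hpow
    ((eventually_principal.mpr hdouble).filter_mono inf_le_right)
  have hcos₃ : 2 * (Real.cos ((n' + 3) * θ) : ℂ) = u ^ n' * u ^ 3 + U ^ n' * U ^ 3 := by
    simpa only [Nat.cast_ofNat] using two_mul_cos_add_nat_mul θ n' 3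
  have hcos₂ : 2 * (Real.cos ((n' + 2) * θ) : ℂ) = u ^ n' * u ^ 2 + U ^ n' * U ^ 2 := by
    simpa only [Nat.cast_ofNat] using two_mul_cos_add_nat_mul θ n' 2
  exact ⟨h3, by rwa [neg_mul, ofReal_cos, two_cos], by rwa [hcos₃], by rwa [hcos₂]⟩

theorem coeff_asymptotics
    (k l : ℕ) (hk : 0 < k) (hl : 0 < l) (hcop : Nat.Coprime k l)
    (θ : ℝ) (hθ : θ = k * Real.pi / l) (hθI : θ ∈ Set.Ioc 0 (Real.pi / 2))
    (n' : ℕ) (hn' : n' < 2 * l)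
    (t0 t1 t2 t3 : ℕ → ℂ)
    (hdouble : ∀ n : ℕ, n % (2 * l) = n' →
      (Qfam t0 t1 t2 t3 n).eval (Complex.exp (θ * Complex.I)) = 0 ∧
      (Polynomial.derivative (Qfam t0 t1 t2 t3 n)).eval (Complex.exp (θ * Complex.I)) = 0 ∧
      (Qfam t0 t1 t2 t3 n).eval (Complex.exp (-θ * Complex.I)) = 0 ∧
      (Polynomial.derivative (Qfam t0 t1 t2 t3 n)).eval (Complex.exp (-θ * Complex.I)) = 0) :
    Asymptotics.IsBigO (atTop ⊓ Filter.principal {n : ℕ | n % (2 * l) = n'})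
      (fun n : ℕ => t3 n - (1 - 2 / (n : ℂ))) (fun n : ℕ => ((n : ℝ) ^ 2)⁻¹) ∧
    Asymptotics.IsBigO (atTop ⊓ Filter.principal {n : ℕ | n % (2 * l) = n'})
      (fun n : ℕ => t2 n - (-2 * (Real.cos θ : ℂ) + 2 * (Real.cos θ : ℂ) / (n : ℂ)))
      (fun n : ℕ => ((n : ℝ) ^ 2)⁻¹) ∧
    Asymptotics.IsBigO (atTop ⊓ Filter.principal {n : ℕ | n % (2 * l) = n'})
      (fun n : ℕ => t1 n - 2 * (Real.cos ((n' + 3) * θ) : ℂ) / (n : ℂ))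
      (fun n : ℕ => ((n : ℝ) ^ 2)⁻¹) ∧
    Asymptotics.IsBigO (atTop ⊓ Filter.principal {n : ℕ | n % (2 * l) = n'})
      (fun n : ℕ => t0 n + 2 * (Real.cos ((n' + 2) * θ) : ℂ) / (n : ℂ))
      (fun n : ℕ => ((n : ℝ) ^ 2)⁻¹) :=
  coeff_asymptotics_general k l hl θ hθ hθI n' t0 t1 t2 t3 hdouble
end

section
/- Let m ≥ 1, let a_1, …, a_m be pairwise distinct complex numbers with |a_j| = 1, let α_1, …, α_m be positive integers, set α := ∑_{j=1}^m α_j, and let f(X) := ∏_{j=1}^m (X − a_j)^{α_j}. Let n ≥ 1 and let p_n be the degree-n OPA to 1/f. Suppose p_n has exactly n pairwise distinct complex roots w_1, …, w_n. Then there exists a monic polynomial T ∈ ℂ[X] of degree at most m − 1 such that for every k with w_k ∉ {0, a_1, …, a_m} and T(w_k) ≠ 0: ∑_{j ≠ k} 1/(w_k − w_j) − ((n + α)/2)/w_k + ∑_{j=1}^m (α_j + 1/2)/(w_k − a_j) − (1/2)·T'(w_k)/T(w_k) = 0. -/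
open Polynomial Complex

open scoped ComplexConjugate InnerProductSpace

/-!
The OPA is a least-squares problem, so the residual `1 - p f` is H²-orthogonal to `X ^ e * f` for
`e ≤ n`. Since the `a j` are unimodular, `f` is self-inversive (`conj`-reversing it gives a multiple
of `f`), and the orthogonality says that the coefficients of `p f²` in degrees `A, …, A + n`
(`A = deg f`) are `1, 0, …, 0`. Hence `p f² = y + X ^ (n + A + 1) * b` with `deg y ≤ A`.

With `F = ∏ (X - a j)` and `G = F f' / f = ∑ α j ∏_{i ≠ j} (X - a i)`, the polynomial
`Q = F p' + 2 G p` satisfies `F p (p f²)' = (p f²) Q`; inserting the splitting shows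
`y Q - F p y' = X ^ (n + A) * T` for an explicit `T` of degree `< m`, nonzero because its
coefficient of degree `m - 1` is `(n + A) * lead p`. At a zero `w` of `p`, differentiating this
identity gives `T'/T = Q'/Q - (n + A)/w`, and expanding `Q'/Q = F'/F + p''/p' + 2 G/F` in partial
fractions is the equilibrium identity.
-/

lemma hnormSq_eq_sum {g : ℂ[X]} {M : ℕ} (h : g.natDegree < M) :
    hnormSq g = ∑ k ∈ Finset.range M, ‖g.coeff k‖ ^ 2 := by
  refine finsum_eq_sum_of_support_subset _ fun k hk => ?_
  have : g.coeff k ≠ 0 := fun h0 => hk (by simp [h0])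
  simpa using (le_natDegree_of_ne_zero this).trans_lt h

/-- Truncation to the first `M` coefficients; it turns the OPA problem into a projection problem
in `EuclideanSpace`. -/
noncomputable def coeffVec (M : ℕ) : ℂ[X] →ₗ[ℂ] EuclideanSpace ℂ (Fin M) :=
  (WithLp.linearEquiv 2 ℂ (Fin M → ℂ)).symm.toLinearMap ∘ₗ LinearMap.pi fun k => lcoeff ℂ k

lemma norm_coeffVec_sq {g : ℂ[X]} {M : ℕ} (h : g.natDegree < M) :
    ‖coeffVec M g‖ ^ 2 = hnormSq g := by
  rw [EuclideanSpace.norm_sq_eq, hnormSq_eq_sum h, ← Fin.sum_univ_eq_sum_range]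
  rfl

lemma inner_coeffVec (M : ℕ) (g h : ℂ[X]) :
    ⟪coeffVec M g, coeffVec M h⟫_ℂ = ∑ k ∈ Finset.range M, conj (g.coeff k) * h.coeff k := by
  rw [PiLp.inner_apply, ← Fin.sum_univ_eq_sum_range (fun k => conj (g.coeff k) * h.coeff k)]
  exact Finset.sum_congr rfl fun k _ => RCLike.inner_apply' _ _

theorem IsOPA.sum_conj_coeff_mul_eq_zero {f p q : ℂ[X]} {n M : ℕ} (hp : IsOPA f n p)
    (hM : n + f.natDegree < M) (hq : q.degree ≤ n) :
    ∑ k ∈ Finset.range M, conj ((q * f).coeff k) * (1 - p * f).coeff k = 0 := by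
  have hlt : ∀ r : ℂ[X], r.degree ≤ n → (1 - r * f).natDegree < M := fun r hr =>
    (natDegree_sub_le _ _).trans_lt <| max_lt (by simp; omega) <|
      natDegree_mul_le.trans_lt (by have := natDegree_le_of_degree_le hr; omega)
  set K := (degreeLE ℂ n).map (coeffVec M ∘ₗ LinearMap.mulRight ℂ f)
  have hmem : ∀ r : ℂ[X], r.degree ≤ n → coeffVec M (r * f) ∈ K := fun r hr =>
    ⟨r, mem_degreeLE.2 hr, rfl⟩
  have hmin : ‖coeffVec M 1 - coeffVec M (p * f)‖ = ⨅ v : K, ‖coeffVec M 1 - v‖ := by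
    refine le_antisymm (le_ciInf ?_) ?_
    · rintro ⟨_, r, hr, rfl⟩
      rw [← map_sub, ← pow_le_pow_iff_left₀ (norm_nonneg _) (norm_nonneg _) two_ne_zero]
      simp only [LinearMap.comp_apply, LinearMap.mulRight_apply, ← map_sub,
        norm_coeffVec_sq (hlt _ hp.1), norm_coeffVec_sq (hlt _ (mem_degreeLE.1 hr))]
      exact hp.2 r (mem_degreeLE.1 hr)
    · have hbdd : BddBelow (Set.range fun v : K => ‖coeffVec M 1 - v‖) :=
        ⟨0, by rintro _ ⟨v, rfl⟩; exact norm_nonneg _⟩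
      exact ciInf_le hbdd (⟨coeffVec M (p * f), hmem p hp.1⟩ : K)
  have := (K.norm_eq_iInf_iff_inner_eq_zero (hmem p hp.1)).1 hmin _ (hmem q hq)
  rwa [← map_sub, inner_eq_zero_symm, inner_coeffVec] at this

namespace Polynomial

lemma reverse_X_sub_C {R : Type*} [Ring R] (b : R) : (X - C b).reverse = 1 - C b * X := by
  nontriviality R
  rw [sub_eq_add_neg, ← C_neg, reverse_add_C, ← one_mul X, reverse_mul_X]
  simp [sub_eq_add_neg, ← C_1, -map_one]

noncomputable def reverseMonoidHom (R : Type*) [Semiring R] [NoZeroDivisors R] : R[X] →* R[X] where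
  toFun := reverse
  map_one' := by simpa using reverse_C (1 : R)
  map_mul' := reverse_mul_of_domain

end Polynomial

lemma reverse_map_conj_X_sub_C {a : ℂ} (ha : ‖a‖ = 1) :
    ((X - C a).map (starRingEnd ℂ)).reverse = C (-conj a) * (X - C a) := by
  have h : conj a * a = 1 := by
    rw [mul_comm, mul_conj, normSq_eq_norm_sq, ha]; norm_num
  rw [Polynomial.map_sub, map_X, map_C, reverse_X_sub_C, C_neg, neg_mul, mul_sub, ← C_mul, h,
    C_1]
  ring

lemma reverse_map_conj_prod_X_sub_C_pow {ι : Type*} (s : Finset ι) {a : ι → ℂ}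
    (ha : ∀ i ∈ s, ‖a i‖ = 1) (α : ι → ℕ) :
    ((∏ i ∈ s, (X - C (a i)) ^ α i).map (starRingEnd ℂ)).reverse =
      C (∏ i ∈ s, (-conj (a i)) ^ α i) * ∏ i ∈ s, (X - C (a i)) ^ α i := by
  change reverseMonoidHom ℂ (mapRingHom (starRingEnd ℂ) _) = _
  simp only [map_prod, map_pow, ← Finset.prod_mul_distrib, ← mul_pow]
  exact Finset.prod_congr rfl fun i hi => by rw [coe_mapRingHom, reverseMonoidHom,
    MonoidHom.coe_mk, OneHom.coe_mk, reverse_map_conj_X_sub_C (ha i hi)]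

lemma conj_coeff_eq_of_reverse_map_conj {f : ℂ[X]} {γ : ℂ}
    (hf : (f.map (starRingEnd ℂ)).reverse = C γ * f) {i : ℕ} (hi : i ≤ f.natDegree) :
    conj (f.coeff i) = γ * f.coeff (f.natDegree - i) := by
  have := congrArg (coeff · (f.natDegree - i)) hf
  simp only [coeff_reverse, natDegree_map, coeff_C_mul, coeff_map] at this
  rwa [revAt_le (Nat.sub_le _ _), Nat.sub_sub_self hi] at this

lemma sum_conj_coeff_X_pow_mul_mul_coeff {f : ℂ[X]} {γ : ℂ}
    (hf : (f.map (starRingEnd ℂ)).reverse = C γ * f) (u : ℂ[X]) {e M : ℕ}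
    (hM : f.natDegree + e < M) :
    ∑ k ∈ Finset.range M, conj ((X ^ e * f).coeff k) * u.coeff k =
      γ * (u * f).coeff (f.natDegree + e) := by
  have hcoeff : ∀ k ≤ f.natDegree + e,
      conj ((X ^ e * f).coeff k) = γ * f.coeff (f.natDegree + e - k) := by
    intro k hk
    rw [coeff_X_pow_mul']
    split_ifs with hek
    · rw [conj_coeff_eq_of_reverse_map_conj hf (by omega), show f.natDegree - (k - e) =
        f.natDegree + e - k by omega]
    · rw [coeff_eq_zero_of_natDegree_lt (by omega : f.natDegree < f.natDegree + e - k)]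
      simp
  rw [coeff_mul, Finset.Nat.sum_antidiagonal_eq_sum_range_succ (fun i j => u.coeff i * f.coeff j),
    Finset.mul_sum, ← Finset.sum_subset (Finset.range_subset_range.2 hM)]
  · refine Finset.sum_congr rfl fun k hk => ?_
    rw [hcoeff k (by simpa [Nat.lt_succ_iff] using hk)]
    ring
  · intro k _ hk
    have : (X ^ e * f).natDegree < k := natDegree_mul_le.trans_lt (by simp at hk; simp; omega)
    simp [coeff_eq_zero_of_natDegree_lt this]

theorem IsOPA.coeff_mul_sq_eq {f p : ℂ[X]} {n : ℕ} {γ : ℂ} (hp : IsOPA f n p)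
    (hf : (f.map (starRingEnd ℂ)).reverse = C γ * f) (hf0 : f ≠ 0) {e : ℕ} (he : e ≤ n) :
    (p * f ^ 2).coeff (f.natDegree + e) = f.coeff (f.natDegree + e) := by
  have hγ : γ ≠ 0 := by
    rintro rfl
    simp [reverse_eq_zero, hf0] at hf
  have horth := hp.sum_conj_coeff_mul_eq_zero (M := n + f.natDegree + 1) (lt_add_one _)
    (q := X ^ e) (by simpa using he)
  rw [sum_conj_coeff_X_pow_mul_mul_coeff hf _ (by omega), mul_eq_zero, or_iff_right hγ,
    show (1 - p * f) * f = f - p * f ^ 2 by ring, coeff_sub, sub_eq_zero] at horth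
  exact horth.symm

/-- The numerator of `∑ i ∈ s, β i / (X - z i)` over the denominator `∏ i ∈ s, (X - z i)`. -/
noncomputable def sumDivNumerator {R ι : Type*} [CommRing R] [DecidableEq ι] (s : Finset ι)
    (z β : ι → R) : R[X] :=
  ∑ i ∈ s, C (β i) * ∏ j ∈ s.erase i, (X - C (z j))

section sumDivNumerator

variable {R K ι : Type*} [CommRing R] [Field K] [DecidableEq ι] (s : Finset ι)

lemma eval_sumDivNumerator (z β : ι → K) {x : K} (hx : ∀ i ∈ s, x ≠ z i) :
    (sumDivNumerator s z β).eval x = (∏ i ∈ s, (x - z i)) * ∑ i ∈ s, β i / (x - z i) := by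
  simp only [sumDivNumerator, eval_finsetSum, eval_mul, eval_C, eval_prod, eval_sub, eval_X,
    Finset.mul_sum]
  refine Finset.sum_congr rfl fun i hi => ?_
  rw [← Finset.mul_prod_erase s _ hi]
  field_simp [sub_ne_zero.2 (hx i hi)]

lemma eval_sumDivNumerator_div (z β : ι → K) {x : K} (hx : ∀ i ∈ s, x ≠ z i) :
    (sumDivNumerator s z β).eval x / (∏ i ∈ s, (X - C (z i))).eval x =
      ∑ i ∈ s, β i / (x - z i) := by
  rw [eval_sumDivNumerator s z β hx, eval_prod]
  simp only [eval_sub, eval_X, eval_C]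
  exact mul_div_cancel_left₀ _ (Finset.prod_ne_zero_iff.2 fun i hi => sub_ne_zero.2 (hx i hi))

lemma natDegree_sumDivNumerator_le (z β : ι → R) :
    (sumDivNumerator s z β).natDegree ≤ s.card - 1 := by
  nontriviality R
  exact natDegree_sum_le_of_forall_le _ _ fun i hi =>
    natDegree_C_mul_le _ _ |>.trans (by simp [Finset.card_erase_of_mem hi])

lemma coeff_sumDivNumerator [Nontrivial R] (z β : ι → R) :
    (sumDivNumerator s z β).coeff (s.card - 1) = ∑ i ∈ s, β i := by
  rw [sumDivNumerator, finsetSum_coeff]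
  refine Finset.sum_congr rfl fun i hi => ?_
  have hdeg := natDegree_finsetProd_X_sub_C_eq_card (s.erase i) z
  rw [Finset.card_erase_of_mem hi] at hdeg
  rw [coeff_C_mul, ← hdeg, (monic_prod_X_sub_C z _).coeff_natDegree, mul_one]

lemma derivative_prod_X_sub_C (z : ι → R) :
    derivative (∏ i ∈ s, (X - C (z i))) = sumDivNumerator s z 1 := by
  simp [derivative_prod_finset, sumDivNumerator]

lemma X_sub_C_mul_derivative_X_sub_C_pow (c : R) (k : ℕ) :
    (X - C c) * derivative ((X - C c) ^ k) = C (k : R) * (X - C c) ^ k := by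
  rcases k with _ | k
  · simp
  · rw [derivative_X_sub_C_pow, Nat.add_sub_cancel, pow_succ]
    ring

/-- The logarithmic derivative of `∏ (X - z i) ^ β i`, cleared of denominators. -/
lemma prod_X_sub_C_mul_derivative_prod_pow (z : ι → R) (β : ι → ℕ) :
    (∏ i ∈ s, (X - C (z i))) * derivative (∏ i ∈ s, (X - C (z i)) ^ β i) =
      sumDivNumerator s z (fun i => β i) * ∏ i ∈ s, (X - C (z i)) ^ β i := by
  rw [derivative_prod_finset, Finset.mul_sum, sumDivNumerator, Finset.sum_mul]
  refine Finset.sum_congr rfl fun i hi => ?_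
  rw [← Finset.mul_prod_erase s (fun j => X - C (z j)) hi,
    ← Finset.mul_prod_erase s (fun j => (X - C (z j)) ^ β j) hi]
  linear_combination (∏ j ∈ s.erase i, (X - C (z j))) * (∏ j ∈ s.erase i, (X - C (z j)) ^ β j) *
    X_sub_C_mul_derivative_X_sub_C_pow (z i) (β i)

end sumDivNumerator

section CommRing

variable {R : Type*} [CommRing R]

lemma coeff_modByMonic_X_pow (Y : R[X]) {k N : ℕ} (hk : k < N) :
    (Y %ₘ X ^ N).coeff k = Y.coeff k := by
  conv_rhs => rw [← modByMonic_add_div Y (X ^ N)]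
  rw [coeff_add, coeff_X_pow_mul', if_neg (by omega), add_zero]

lemma natDegree_modByMonic_X_pow_le {Y : R[X]} {A N : ℕ}
    (hY : ∀ k, A < k → k < N → Y.coeff k = 0) : (Y %ₘ X ^ N).natDegree ≤ A := by
  nontriviality R
  refine natDegree_le_iff_coeff_eq_zero.2 fun k hk => ?_
  by_cases hkN : k < N
  · rw [coeff_modByMonic_X_pow Y hkN, hY k (by exact_mod_cast hk) hkN]
  · refine coeff_eq_zero_of_degree_lt ((degree_modByMonic_lt Y (monic_X_pow N)).trans_le ?_)
    rw [degree_X_pow]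
    exact_mod_cast not_lt.1 hkN

lemma X_pow_mul_eq_of_mul_derivative_eq {Y y b P Q : R[X]} {N : ℕ}
    (hY : Y = y + X ^ (N + 1) * b) (h : P * derivative Y = Y * Q) :
    X ^ N * (P * (C ((N : R) + 1) * b + X * derivative b) - X * b * Q) =
      y * Q - P * derivative y := by
  have hy' : derivative y =
      derivative Y - (C ((N : R) + 1) * X ^ N * b + X ^ (N + 1) * derivative b) := by
    rw [hY, derivative_add, derivative_mul, derivative_X_pow]
    push_cast
    ring
  rw [hy', show y = Y - X ^ (N + 1) * b by rw [hY]; ring]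
  linear_combination h

lemma derivative_X_sub_C_mul (x : R) (ρ : R[X]) :
    derivative ((X - C x) * ρ) = ρ + (X - C x) * derivative ρ := by
  rw [derivative_mul, derivative_X_sub_C, one_mul]

lemma mul_derivative_mul_sq_eq {F G f : R[X]} (hFG : F * derivative f = G * f) (p : R[X]) :
    F * p * derivative (p * f ^ 2) = p * f ^ 2 * (F * derivative p + 2 * G * p) := by
  rw [derivative_mul, derivative_sq, C_ofNat]
  linear_combination (2 * p ^ 2 * f) * hFG

section MulSubMulDerivative

variable {y Q P : R[X]} {A D : ℕ}

lemma natDegree_mul_sub_mul_derivative_le (hy : y.natDegree ≤ A) (hQ : Q.natDegree ≤ D)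
    (hP : P.natDegree ≤ D + 1) : (y * Q - P * derivative y).natDegree ≤ A + D := by
  refine (natDegree_sub_le _ _).trans (max_le (natDegree_mul_le.trans (by omega)) ?_)
  rcases Nat.eq_zero_or_pos y.natDegree with hy0 | hy0
  · simp [derivative_of_natDegree_zero hy0]
  · exact natDegree_mul_le.trans (by have := natDegree_derivative_le y; omega)

lemma coeff_mul_sub_mul_derivative (hy : y.natDegree ≤ A) (hQ : Q.natDegree ≤ D)
    (hP : P.natDegree ≤ D + 1) :
    (y * Q - P * derivative y).coeff (A + D) =
      y.coeff A * (Q.coeff D - A * P.coeff (D + 1)) := by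
  rw [coeff_sub, coeff_mul_add_eq_of_natDegree_le hy hQ]
  rcases A with _ | A
  · simp [derivative_of_natDegree_zero (Nat.le_zero.1 hy)]
  · rw [show A + 1 + D = (D + 1) + A by omega,
      coeff_mul_add_eq_of_natDegree_le hP ((natDegree_derivative_le y).trans (by omega)),
      coeff_derivative]
    push_cast
    ring

end MulSubMulDerivative

section MulDerivativeAdd

variable {F G p : R[X]} {d n : ℕ}

lemma natDegree_mul_derivative_add_le (hF : F.natDegree ≤ d + 1) (hG : G.natDegree ≤ d)
    (hp : p.natDegree ≤ n + 1) : (F * derivative p + 2 * G * p).natDegree ≤ d + n + 1 := by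
  have h2G : (2 * G).natDegree ≤ d := natDegree_mul_le.trans (by simpa using hG)
  refine (natDegree_add_le _ _).trans (max_le ?_ ?_) <;> refine natDegree_mul_le.trans ?_
  · have := natDegree_derivative_le p; omega
  · omega

lemma coeff_mul_derivative_add (hF : F.natDegree ≤ d + 1) (hG : G.natDegree ≤ d)
    (hp : p.natDegree ≤ n + 1) :
    (F * derivative p + 2 * G * p).coeff (d + n + 1) =
      (F.coeff (d + 1) * (n + 1) + 2 * G.coeff d) * p.coeff (n + 1) := by
  have h2G : (2 * G).natDegree ≤ d := natDegree_mul_le.trans (by simpa using hG)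
  rw [coeff_add, show d + n + 1 = (d + 1) + n by omega,
    coeff_mul_add_eq_of_natDegree_le hF ((natDegree_derivative_le p).trans (by omega)),
    show d + 1 + n = d + (n + 1) by omega, coeff_mul_add_eq_of_natDegree_le h2G hp,
    coeff_derivative, ← C_ofNat, coeff_C_mul]
  ring

end MulDerivativeAdd

end CommRing

theorem exists_X_pow_mul_eq_of_coeff_mul_sq {K : Type*} [Field K] [CharZero K]
    {f F G p : K[X]} {A d n : ℕ} (hFG : F * derivative f = G * f) (hF : F.natDegree ≤ d + 1)
    (hF1 : F.coeff (d + 1) = 1) (hG : G.natDegree ≤ d) (hGA : G.coeff d = A)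
    (hp : p.natDegree ≤ n + 1) (hpn : p.coeff (n + 1) ≠ 0) (hY0 : (p * f ^ 2).coeff A = 1)
    (hY : ∀ e, 0 < e → e ≤ n + 1 → (p * f ^ 2).coeff (A + e) = 0) :
    ∃ T y : K[X], T ≠ 0 ∧ T.natDegree ≤ d ∧
      X ^ (n + 1 + A) * T = y * (F * derivative p + 2 * G * p) - F * p * derivative y := by
  set y := (p * f ^ 2) %ₘ X ^ (n + 1 + A + 1)
  have hy : y.natDegree ≤ A := natDegree_modByMonic_X_pow_le fun k hk hkN => by
    simpa [Nat.add_sub_cancel' hk.le] using hY (k - A) (by omega) (by omega)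
  have hyA : y.coeff A = 1 := by rw [coeff_modByMonic_X_pow _ (by omega), hY0]
  have hQ := natDegree_mul_derivative_add_le hF hG hp
  have hFp : (F * p).natDegree ≤ d + n + 1 + 1 := natDegree_mul_le.trans (by omega)
  have hRdeg := natDegree_mul_sub_mul_derivative_le hy hQ hFp
  have hR := coeff_mul_sub_mul_derivative hy hQ hFp
  rw [coeff_mul_derivative_add hF hG hp, show d + n + 1 + 1 = (d + 1) + (n + 1) by omega,
    coeff_mul_add_eq_of_natDegree_le hF hp, hyA, hF1, hGA] at hR
  obtain ⟨T, hkey⟩ : ∃ T, X ^ (n + 1 + A) * T = y * (F * derivative p + 2 * G * p) -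
      F * p * derivative y := ⟨_, X_pow_mul_eq_of_mul_derivative_eq
        (modByMonic_add_div (p * f ^ 2) _).symm (mul_derivative_mul_sq_eq hFG p)⟩
  have hT : ∀ k, T.coeff k = (y * (F * derivative p + 2 * G * p) -
      F * p * derivative y).coeff (k + (n + 1 + A)) := fun k => by
    rw [← hkey, coeff_X_pow_mul', if_pos (by omega), Nat.add_sub_cancel]
  refine ⟨T, y, fun hT0 => ?_, natDegree_le_iff_coeff_eq_zero.2 fun k hk => ?_, hkey⟩
  · have := hT d
    rw [hT0, coeff_zero, show d + (n + 1 + A) = A + (d + n + 1) by omega, hR] at this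
    have hN : ((n : K) + 1 + A) * p.coeff (n + 1) = 0 := by linear_combination -this
    exact hpn ((mul_eq_zero.1 hN).resolve_left (by norm_cast; omega))
  · rw [hT, coeff_eq_zero_of_natDegree_lt (hRdeg.trans_lt (by omega))]

theorem IsOPA.exists_X_pow_mul_eq {ι : Type*} [Fintype ι] [DecidableEq ι] [Nonempty ι]
    {a : ι → ℂ} (ha : ∀ i, ‖a i‖ = 1) (α : ι → ℕ) {n : ℕ} {p : ℂ[X]}
    (hp : IsOPA (∏ i, (X - C (a i)) ^ α i) n p) (hn : 1 ≤ n) (hpn : p.coeff n ≠ 0) :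
    ∃ T y : ℂ[X], T ≠ 0 ∧ T.natDegree ≤ Fintype.card ι - 1 ∧
      X ^ (n + ∑ i, α i) * T =
        y * ((∏ i, (X - C (a i))) * derivative p +
          2 * sumDivNumerator Finset.univ a (fun i => α i) * p) -
        (∏ i, (X - C (a i))) * p * derivative y := by
  obtain ⟨n, rfl⟩ := Nat.exists_eq_add_of_le' hn
  obtain ⟨d, hd⟩ := Nat.exists_eq_add_of_le' (Fintype.card_pos (α := ι))
  have hfm : (∏ i, (X - C (a i)) ^ α i).Monic :=
    monic_prod_of_monic _ _ fun i _ => (monic_X_sub_C (a i)).pow (α i)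
  have hfdeg : (∏ i, (X - C (a i)) ^ α i).natDegree = ∑ i, α i := by
    rw [natDegree_prod_of_monic _ _ fun i _ => (monic_X_sub_C (a i)).pow (α i)]
    simp
  have hgap := fun e (he : e ≤ n + 1) => hp.coeff_mul_sq_eq
    (reverse_map_conj_prod_X_sub_C_pow Finset.univ (fun i _ => ha i) α) hfm.ne_zero he
  simp only [hfdeg] at hgap
  have hF : (∏ i, (X - C (a i))).natDegree = d + 1 := by
    rw [natDegree_finsetProd_X_sub_C_eq_card, Finset.card_univ, hd]
  rw [hd, Nat.add_sub_cancel]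
  refine exists_X_pow_mul_eq_of_coeff_mul_sq (prod_X_sub_C_mul_derivative_prod_pow _ a α)
    hF.le ?_ ?_ ?_ (natDegree_le_of_degree_le hp.1) hpn ?_ fun e he he' => ?_
  · rw [← hF, (monic_prod_X_sub_C a _).coeff_natDegree]
  · simpa [hd] using natDegree_sumDivNumerator_le Finset.univ a (fun i => (α i : ℂ))
  · simpa [hd] using coeff_sumDivNumerator Finset.univ a (fun i => (α i : ℂ))
  · simpa [← hfdeg, hfm.coeff_natDegree] using hgap 0 (Nat.zero_le _)
  · rw [hgap e he', coeff_eq_zero_of_natDegree_lt (by omega)]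

section Evaluation

variable {K : Type*} [Field K]

lemma eval_derivative_div_eval_of_X_pow_mul_eq {T y P Q : K[X]} {N : ℕ} {w : K}
    (h : X ^ N * T = y * Q - P * derivative y) (hP : P.eval w = 0)
    (hQ : Q.eval w = (derivative P).eval w) (hw : w ≠ 0) (hT : T.eval w ≠ 0) :
    (derivative T).eval w / T.eval w = (derivative Q).eval w / Q.eval w - N / w := by
  -- at `w`: `w ^ N T = y Q` and `N w ^ (N - 1) T + w ^ N T' = y Q'`
  have h0 := congrArg (eval w) h
  have h1 := congrArg (eval w ∘ derivative) h
  simp only [Function.comp_apply, derivative_mul, derivative_sub, derivative_X_pow, eval_add,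
    eval_sub, eval_mul, eval_pow, eval_X, eval_C, hP, zero_mul, sub_zero] at h0 h1
  have hyQ : y.eval w * Q.eval w ≠ 0 := h0 ▸ mul_ne_zero (pow_ne_zero _ hw) hT
  have hpow : (N : K) * w ^ (N - 1) * w = N * w ^ N := by
    rcases N with _ | N
    · simp
    · rw [Nat.add_sub_cancel, mul_assoc, ← pow_succ]
  rw [div_sub_div _ _ (right_ne_zero_of_mul hyQ) hw, div_eq_div_iff hT
    (mul_ne_zero (right_ne_zero_of_mul hyQ) hw)]
  refine mul_left_cancel₀ (pow_ne_zero N hw) ?_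
  linear_combination (w * Q.eval w) * h1 - (Q.eval w * T.eval w) * hpow +
    (w * Q.eval w * (derivative y).eval w) * hQ - (w * (derivative Q).eval w) * h0

lemma eval_derivative_div_eval_of_eval_eq_zero {T y F G p : K[X]} {N : ℕ} {w : K}
    (h : X ^ N * T = y * (F * derivative p + 2 * G * p) - F * p * derivative y)
    (hpw : p.eval w = 0) (hw : w ≠ 0) (hFw : F.eval w ≠ 0) (hp'w : (derivative p).eval w ≠ 0)
    (hT : T.eval w ≠ 0) :
    (derivative T).eval w / T.eval w = (derivative F).eval w / F.eval w +
      (derivative (derivative p)).eval w / (derivative p).eval w + 2 * (G.eval w / F.eval w) -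
        N / w := by
  rw [eval_derivative_div_eval_of_X_pow_mul_eq h (by simp [hpw]) (by simp [derivative_mul, hpw])
    hw hT]
  simp only [derivative_add, derivative_mul, derivative_ofNat, eval_add, eval_mul, eval_ofNat,
    hpw, zero_mul, zero_add, mul_zero, add_zero]
  field_simp

variable {ι : Type*} [DecidableEq ι] {s : Finset ι} (z : ι → K) {k : ι}

lemma eval_derivative_prod_X_sub_C_self (hk : k ∈ s) :
    (derivative (∏ i ∈ s, (X - C (z i)))).eval (z k) = ∏ i ∈ s.erase k, (z k - z i) := by
  rw [← Finset.mul_prod_erase s _ hk, derivative_X_sub_C_mul]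
  simp [eval_prod]

lemma eval_derivative_prod_X_sub_C_self_ne_zero (hk : k ∈ s) (hz : ∀ i ∈ s.erase k, z k ≠ z i) :
    (derivative (∏ i ∈ s, (X - C (z i)))).eval (z k) ≠ 0 := by
  rw [eval_derivative_prod_X_sub_C_self z hk]
  exact Finset.prod_ne_zero_iff.2 fun i hi => sub_ne_zero.2 (hz i hi)

lemma eval_derivative_derivative_prod_X_sub_C_self (hk : k ∈ s)
    (hz : ∀ i ∈ s.erase k, z k ≠ z i) :
    (derivative (derivative (∏ i ∈ s, (X - C (z i))))).eval (z k) =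
      2 * (derivative (∏ i ∈ s, (X - C (z i)))).eval (z k) * ∑ i ∈ s.erase k, 1 / (z k - z i) := by
  have hρ := eval_sumDivNumerator (s.erase k) z 1 hz
  rw [← derivative_prod_X_sub_C] at hρ
  rw [eval_derivative_prod_X_sub_C_self z hk, ← Finset.mul_prod_erase s _ hk,
    derivative_X_sub_C_mul, derivative_add, derivative_X_sub_C_mul]
  simp only [eval_add, eval_mul, eval_sub, eval_X, eval_C, sub_self, zero_mul, add_zero, hρ,
    Pi.one_apply]
  ring

end Evaluation

theorem electrostatic_identity_of_X_pow_mul_eq {ι κ : Type*} [Fintype ι] [DecidableEq ι]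
    [Fintype κ] [DecidableEq κ] {a : ι → ℂ} (α : ι → ℕ) {w : κ → ℂ} (hw : Function.Injective w)
    {c : ℂ} (hc : c ≠ 0) {p T y : ℂ[X]} {N : ℕ} (hp : p = C c * ∏ j, (X - C (w j)))
    (h : X ^ N * T = y * ((∏ i, (X - C (a i))) * derivative p +
      2 * sumDivNumerator Finset.univ a (fun i => α i) * p) -
        (∏ i, (X - C (a i))) * p * derivative y)
    {k : κ} (hk0 : w k ≠ 0) (hka : ∀ i, w k ≠ a i) (hT : T.eval (w k) ≠ 0) :
    ∑ j ∈ Finset.univ.erase k, 1 / (w k - w j) - (N / 2) / w k +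
      ∑ i, ((α i : ℂ) + 1 / 2) / (w k - a i) -
        1 / 2 * (derivative T).eval (w k) / T.eval (w k) = 0 := by
  have hFw : ∀ i ∈ Finset.univ, w k ≠ a i := fun i _ => hka i
  have hz : ∀ j ∈ Finset.univ.erase k, w k ≠ w j := fun j hj =>
    hw.ne (Finset.ne_of_mem_erase hj).symm
  have hP0 := eval_derivative_prod_X_sub_C_self_ne_zero w (Finset.mem_univ k) hz
  have hp'0 : (derivative p).eval (w k) ≠ 0 := by
    rw [hp, derivative_C_mul, eval_C_mul]
    exact mul_ne_zero hc hP0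
  have hp'' : (derivative (derivative p)).eval (w k) / (derivative p).eval (w k) =
      2 * ∑ j ∈ Finset.univ.erase k, 1 / (w k - w j) := by
    rw [div_eq_iff hp'0, hp, derivative_C_mul, derivative_C_mul, eval_C_mul, eval_C_mul,
      eval_derivative_derivative_prod_X_sub_C_self w (Finset.mem_univ k) hz]
    ring
  have hlog := eval_derivative_div_eval_of_eval_eq_zero h
    (by simp [hp, eval_prod, Finset.prod_eq_zero (Finset.mem_univ k)]) hk0
    (by simpa [eval_prod, Finset.prod_eq_zero_iff, sub_eq_zero] using hka)
    hp'0 hT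
  rw [derivative_prod_X_sub_C, eval_sumDivNumerator_div _ _ _ hFw,
    eval_sumDivNumerator_div _ _ _ hFw, hp''] at hlog
  have hsplit : ∑ i, ((α i : ℂ) + 1 / 2) / (w k - a i) =
      ∑ i, (α i : ℂ) / (w k - a i) + 1 / 2 * ∑ i, 1 / (w k - a i) := by
    rw [Finset.mul_sum, ← Finset.sum_add_distrib]
    exact Finset.sum_congr rfl fun i _ => by ring
  rw [hsplit, mul_div_assoc, hlog]
  simp only [Pi.one_apply]
  ring

theorem opa_generalized_jacobi_electrostatics_general
    (m : ℕ) (hm : 1 ≤ m) (a : Fin m → ℂ)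
    (hmod : ∀ j, ‖a j‖ = 1)
    (α : Fin m → ℕ)
    (n : ℕ) (hn : 1 ≤ n)
    (p : Polynomial ℂ)
    (hp : IsOPA (∏ j, (Polynomial.X - Polynomial.C (a j)) ^ (α j)) n p)
    (c : ℂ) (hc : c ≠ 0)
    (w : Fin n → ℂ) (hwinj : Function.Injective w)
    (hroots : p = Polynomial.C c * ∏ j, (Polynomial.X - Polynomial.C (w j))) :
    ∃ T : Polynomial ℂ, T.Monic ∧ T.degree ≤ ((m - 1 : ℕ) : WithBot ℕ) ∧
      ∀ k : Fin n, w k ≠ 0 → (∀ j, w k ≠ a j) → T.eval (w k) ≠ 0 →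
        (∑ j ∈ Finset.univ.erase k, 1 / (w k - w j)) -
          (((n : ℂ) + ((∑ j, (α j : ℕ) : ℕ) : ℂ)) / 2) / w k +
          (∑ j, (((α j : ℕ) : ℂ) + 1 / 2) / (w k - a j)) -
          (1 / 2) * (Polynomial.derivative T).eval (w k) / T.eval (w k) = 0 := by
  have : Nonempty (Fin m) := ⟨⟨0, hm⟩⟩
  have hpn : p.coeff n = c := by
    have := (monic_prod_X_sub_C w Finset.univ).coeff_natDegree
    rw [natDegree_finsetProd_X_sub_C_eq_card, Finset.card_fin] at this
    rw [hroots, coeff_C_mul, this, mul_one]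
  obtain ⟨T, y, hT0, hTdeg, hkey⟩ := hp.exists_X_pow_mul_eq hmod α hn (hpn ▸ hc)
  have hu : T.leadingCoeff⁻¹ ≠ 0 := inv_ne_zero (leadingCoeff_ne_zero.2 hT0)
  refine ⟨T * C T.leadingCoeff⁻¹, monic_mul_leadingCoeff_inv hT0, ?_, fun k hk0 hka hTk => ?_⟩
  · rw [degree_mul_C hu]
    exact degree_le_of_natDegree_le (by simpa using hTdeg)
  rw [eval_mul, eval_C] at hTk
  rw [derivative_mul, derivative_C, mul_zero, add_zero, eval_mul, eval_mul, eval_C, ← mul_assoc,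
    mul_div_mul_right _ _ hu]
  simpa using electrostatic_identity_of_X_pow_mul_eq α hwinj hc hroots hkey hk0 hka
    (left_ne_zero_of_mul hTk)

theorem opa_generalized_jacobi_electrostatics
    (m : ℕ) (hm : 1 ≤ m) (a : Fin m → ℂ) (hainj : Function.Injective a)
    (hmod : ∀ j, ‖a j‖ = 1)
    (α : Fin m → ℕ) (hα : ∀ j, 0 < α j)
    (n : ℕ) (hn : 1 ≤ n)
    (p : Polynomial ℂ)
    (hp : IsOPA (∏ j, (Polynomial.X - Polynomial.C (a j)) ^ (α j)) n p)
    (c : ℂ) (hc : c ≠ 0)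
    (w : Fin n → ℂ) (hwinj : Function.Injective w)
    (hroots : p = Polynomial.C c * ∏ j, (Polynomial.X - Polynomial.C (w j))) :
    ∃ T : Polynomial ℂ, T.Monic ∧ T.degree ≤ ((m - 1 : ℕ) : WithBot ℕ) ∧
      ∀ k : Fin n, w k ≠ 0 → (∀ j, w k ≠ a j) → T.eval (w k) ≠ 0 →
        (∑ j ∈ Finset.univ.erase k, 1 / (w k - w j)) -
          (((n : ℂ) + ((∑ j, (α j : ℕ) : ℕ) : ℂ)) / 2) / w k +
          (∑ j, (((α j : ℕ) : ℂ) + 1 / 2) / (w k - a j)) -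
          (1 / 2) * (Polynomial.derivative T).eval (w k) / T.eval (w k) = 0 :=
  opa_generalized_jacobi_electrostatics_general m hm a hmod α n hn p hp c hc w hwinj hroots
end
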